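/- arXiv:1304.7301 — 7 statements merged into one kernel-verified Lean document; each statement's English description precedes it below -/
import Mathlib

section
/- Let λ be the cellular automaton on {0,1}^ℤ defined by λ_{t+1}(x) = λ_t(x-1) + λ_t(x) + λ_t(x+1) mod 2, started from a single 1 at the origin (λ_0(x) = 1 iff x = 0). Then for all nonnegative integers a and m, λ_{a·2^m}(x) = λ_a(y) if x = 2^m·y for some y ∈ ℤ, and λ_{a·2^m}(x) = 0 if 2^m does not divide x. -/
open MeasureTheory

/-- Configurations of the one-dimensional CA: states in `ZMod 2` indexed by `ℤ`. -/
abbrev Config := ℤ → ZMod 2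

/-- One step of the `1 Or 3` rule. -/
def step (f : Config) : Config := fun x => f (x - 1) + f x + f (x + 1)

/-- Evolution of the `1 Or 3` rule. -/
def evol (f : Config) (t : ℕ) : Config := step^[t] f

/-- Single `1` at the origin. -/
def single : Config := fun x => if x = 0 then 1 else 0

/-- Stretch by factor 2. -/
def st1 (f : Config) : Config := fun x => if (2 : ℤ) ∣ x then f (x / 2) else 0

/-- Stretch by factor `2^m`. -/
def stretch : ℕ → Config → Config
  | 0, f => f
  | m + 1, f => st1 (stretch m f)

lemma st1_even (f : Config) (y : ℤ) : st1 f (2 * y) = f y := by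
  simp [st1, Int.mul_ediv_cancel_left _ (by norm_num : (2:ℤ) ≠ 0)]

lemma st1_odd (f : Config) (x : ℤ) (h : ¬ (2:ℤ) ∣ x) : st1 f x = 0 := by
  simp [st1, h]

lemma stretch_mul (m : ℕ) (f : Config) (y : ℤ) :
    stretch m f (2 ^ m * y) = f y := by
  induction m generalizing y with
  | zero => simp [stretch]
  | succ m ih =>
      have h : (2:ℤ) ^ (m + 1) * y = 2 * (2 ^ m * y) := by ring
      rw [stretch, h, st1_even, ih]

lemma stretch_ndvd (m : ℕ) (f : Config) (x : ℤ) (h : ¬ ((2:ℤ) ^ m ∣ x)) :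
    stretch m f x = 0 := by
  induction m generalizing x with
  | zero => simp at h
  | succ m ih =>
      rw [stretch]
      by_cases h2 : (2:ℤ) ∣ x
      · obtain ⟨z, rfl⟩ := h2
        rw [st1_even]
        refine ih z fun hd => h ?_
        obtain ⟨w, rfl⟩ := hd
        exact ⟨w, by ring⟩
      · exact st1_odd _ _ h2

lemma step2 (g : Config) (x : ℤ) :
    step (step g) x = g (x - 2) + g x + g (x + 2) := by
  simp only [step]
  have e1 : x - 1 - 1 = x - 2 := by ring
  have e2 : x - 1 + 1 = x := by ring
  have e3 : x + 1 - 1 = x := by ring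
  have e4 : x + 1 + 1 = x + 2 := by ring
  rw [e1, e2, e3, e4]
  have h2 : (2 : ZMod 2) = 0 := by decide
  linear_combination (g (x - 1) + g x + g (x + 1)) * h2

lemma step_step_st1 (g : Config) : step (step (st1 g)) = st1 (step g) := by
  funext x
  by_cases h : (2:ℤ) ∣ x
  · obtain ⟨y, rfl⟩ := h
    have e1 : 2 * y - 2 = 2 * (y - 1) := by ring
    have e2 : 2 * y + 2 = 2 * (y + 1) := by ring
    rw [step2, e1, e2, st1_even, st1_even, st1_even, st1_even]
    rfl
  · have h1 : ¬ (2:ℤ) ∣ (x - 2) := fun hd => h (by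
      obtain ⟨w, hw⟩ := hd; exact ⟨w + 1, by linarith⟩)
    have h2 : ¬ (2:ℤ) ∣ (x + 2) := fun hd => h (by
      obtain ⟨w, hw⟩ := hd; exact ⟨w - 1, by linarith⟩)
    rw [step2, st1_odd _ _ h1, st1_odd _ _ h, st1_odd _ _ h2, st1_odd _ _ h]
    simp

lemma iter_st1 (g : Config) (n : ℕ) :
    step^[2 * n] (st1 g) = st1 (step^[n] g) := by
  induction n generalizing g with
  | zero => simp
  | succ n ih =>
      have e : 2 * (n + 1) = 2 * n + 2 := by ring
      rw [e, Function.iterate_add_apply]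
      have : step^[2] (st1 g) = st1 (step g) := by
        rw [Function.iterate_succ_apply, Function.iterate_succ_apply,
          Function.iterate_zero_apply]
        exact step_step_st1 g
      rw [this, ih, Function.iterate_succ_apply]

lemma iter_stretch (m a : ℕ) (f : Config) :
    step^[a * 2 ^ m] (stretch m f) = stretch m (step^[a] f) := by
  induction m generalizing f with
  | zero => simp [stretch]
  | succ m ih =>
      have e : a * 2 ^ (m + 1) = 2 * (a * 2 ^ m) := by ring
      rw [stretch, e, iter_st1, ih, stretch]

lemma stretch_single (m : ℕ) : stretch m single = single := by
  induction m with
  | zero => rfl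
  | succ m ih =>
      rw [stretch, ih]
      funext x
      by_cases h : (2:ℤ) ∣ x
      · obtain ⟨y, rfl⟩ := h
        rw [st1_even]
        simp [single, mul_eq_zero]
      · rw [st1_odd _ _ h]
        have : x ≠ 0 := fun hx => h (hx ▸ dvd_zero 2)
        simp [single, this]

theorem rescaling (a m : ℕ) :
    (∀ y : ℤ, evol single (a * 2 ^ m) (2 ^ m * y) = evol single a y) ∧
    (∀ x : ℤ, ¬ ((2 ^ m : ℤ) ∣ x) → evol single (a * 2 ^ m) x = 0) := by
  have key : evol single (a * 2 ^ m) = stretch m (step^[a] single) := by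
    conv_lhs => rw [evol, ← stretch_single m]
    rw [iter_stretch]
  constructor
  · intro y
    rw [key, stretch_mul]
    rfl
  · intro x hx
    rw [key, stretch_ndvd _ _ _ hx]
end

section
/- Let λ• be the '1 Or 3' cellular automaton started from a single 1 at the origin. Then for every n ≥ 1, λ•_{2^n + 2^{n-1}}(x) = 1 if and only if x ∈ {0, 2^n, -2^n, 2^n + 2^{n-1}, -(2^n + 2^{n-1})}. -/
open MeasureTheory

lemma evol_add (f : Config) (m n : ℕ) : evol f (m + n) = evol (evol f n) m := by
  simp [evol, Function.iterate_add_apply]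

lemma zmod2_helper : ∀ a b c d e : ZMod 2,
    a + b + c + (b + c + d) + (c + d + e) = a + c + e := by decide

lemma zmod2_helper7 : ∀ a b c d e f g : ZMod 2,
    a + b + c + (c + d + e) + (e + f + g) = a + b + d + f + g := by decide

lemma evol_two_pow (k : ℕ) (f : Config) (x : ℤ) :
    evol f (2 ^ k) x = f (x - 2 ^ k) + f x + f (x + 2 ^ k) := by
  induction k generalizing f x with
  | zero => simp [evol, step]
  | succ k ih =>
    have h : (2 : ℕ) ^ (k + 1) = 2 ^ k + 2 ^ k := by ring
    rw [h, evol_add, ih, ih, ih, ih]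
    have e1 : x - (2:ℤ) ^ k - 2 ^ k = x - 2 ^ (k + 1) := by ring
    have e2 : x - (2:ℤ) ^ k + 2 ^ k = x := by ring
    have e3 : x + (2:ℤ) ^ k - 2 ^ k = x := by ring
    have e4 : x + (2:ℤ) ^ k + 2 ^ k = x + 2 ^ (k + 1) := by ring
    rw [e1, e2, e3, e4, zmod2_helper]

theorem pow_two_plus_half_times (n : ℕ) (hn : 1 ≤ n) (x : ℤ) :
    evol single (2 ^ n + 2 ^ (n - 1)) x = 1 ↔
      x = 0 ∨ x = 2 ^ n ∨ x = -(2 ^ n : ℤ) ∨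
      x = (2 ^ n + 2 ^ (n - 1) : ℤ) ∨ x = -((2 : ℤ) ^ n + 2 ^ (n - 1)) := by
  obtain ⟨m, rfl⟩ : ∃ m, n = m + 1 := ⟨n - 1, by omega⟩
  simp only [Nat.add_sub_cancel]
  rw [evol_add, evol_two_pow, evol_two_pow, evol_two_pow, evol_two_pow]
  have e1 : x - (2:ℤ) ^ (m+1) - 2 ^ m = x - ((2:ℤ) ^ (m+1) + 2 ^ m) := by ring
  have e2 : x - (2:ℤ) ^ (m+1) + 2 ^ m = x - 2 ^ m := by ring
  have e3 : x + (2:ℤ) ^ (m+1) - 2 ^ m = x + 2 ^ m := by ring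
  have e4 : x + (2:ℤ) ^ (m+1) + 2 ^ m = x + ((2:ℤ) ^ (m+1) + 2 ^ m) := by ring
  rw [e1, e2, e3, e4, zmod2_helper7]
  have hm : ((2:ℤ) ^ (m + 1)) = 2 * 2 ^ m := by ring
  rw [hm]
  have ha : (0:ℤ) < 2 ^ m := by positivity
  simp only [single]
  split_ifs <;> simp <;> omega
end

section
/- For the '1 Or 3' cellular automaton started from a single 1 at the origin, and for any k ≥ 1, the sequence of edge configurations t ↦ (λ•_t(t-k+1), λ•_t(t-k+2), …, λ•_t(t)) is periodic in t (starting from t = 0) with period 2^p, where p is the smallest integer with k ≤ 2^p. -/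
open MeasureTheory

lemma evol_single_eq_zero (t : ℕ) (x : ℤ) (hx : (t : ℤ) < x) : evol single t x = 0 := by
  induction t generalizing x with
  | zero => simp only [evol, Function.iterate_zero, id, single]; rw [if_neg]; omega
  | succ n ih =>
    have h1 : evol single (n + 1) x = step (evol single n) x := by
      rw [evol, Function.iterate_succ_apply']; rfl
    rw [h1, step, ih (x - 1) (by push_cast at hx ⊢; omega),
      ih x (by push_cast at hx ⊢; omega), ih (x + 1) (by push_cast at hx ⊢; omega)]
    ring

lemma step_pow (p : ℕ) (f : Config) (x : ℤ) :
    step^[2 ^ p] f x = f (x - 2 ^ p) + f x + f (x + 2 ^ p) := by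
  induction p generalizing f x with
  | zero => simp [step]
  | succ n ih =>
    have h2 : (2 : ℕ) ^ (n + 1) = 2 ^ n + 2 ^ n := by ring
    rw [h2, Function.iterate_add_apply, ih, ih, ih, ih]
    have h2' : ∀ a : ZMod 2, a * 2 = 0 := by decide
    have h3' : ∀ a : ZMod 2, a * 3 = a := by decide
    push_cast
    ring_nf
    simp [h2', h3']

theorem edge_periodicity_single (k p : ℕ) (hk : 1 ≤ k)
    (hp : k ≤ 2 ^ p) (hmin : ∀ q : ℕ, k ≤ 2 ^ q → p ≤ q) :
    ∀ (t j : ℕ), j < k →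
      evol single (t + 2 ^ p) ((t : ℤ) + 2 ^ p - j) = evol single t ((t : ℤ) - j) := by
  intro t j hj
  have hjp : (j : ℤ) < 2 ^ p := by
    have : (j : ℤ) < k := by exact_mod_cast hj
    have : (k : ℤ) ≤ 2 ^ p := by exact_mod_cast hp
    push_cast at *; omega
  have key : evol single (t + 2 ^ p) = step^[2 ^ p] (evol single t) := by
    rw [evol, evol, add_comm, Function.iterate_add_apply]
  rw [key, step_pow]
  have e1 : evol single t ((t : ℤ) + 2 ^ p - j) = 0 :=
    evol_single_eq_zero _ _ (by push_cast; omega)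
  have e2 : evol single t ((t : ℤ) + 2 ^ p - j + 2 ^ p) = 0 :=
    evol_single_eq_zero _ _ (by push_cast; omega)
  rw [show (t : ℤ) + 2 ^ p - j - 2 ^ p = (t : ℤ) - j by ring, e1, e2]
  ring
end

section
/- Predecessors of zeros: for the '1 Or 3' cellular automaton with arbitrary initial state, suppose λ_t ≡ 0 on an interval [a,b] but λ_{t-1} is not identically 0 on [a-1, b+1]. Then the restriction of λ_{t-1} to [a-1, b+1] is a contiguous subword of the bi-infinite periodic word …110110110…, i.e., there exists a shift s ∈ {0,1,2} such that λ_{t-1}(x) = 1 iff (x - s) mod 3 ∈ {0,1}, for all x ∈ [a-1, b+1]. -/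
open MeasureTheory

/-- Period-3 pattern with initial values `A`, `B`, `A+B` starting at `a`. -/
def pat (a : ℤ) (A B : ZMod 2) (x : ℤ) : ZMod 2 :=
  if (x - a) % 3 = 0 then A else if (x - a) % 3 = 1 then B else A + B

lemma pat_rec (a : ℤ) (A B : ZMod 2) (x : ℤ) :
    pat a A B (x - 2) + pat a A B (x - 1) = pat a A B x := by
  have h3 : (x - a) % 3 = 0 ∨ (x - a) % 3 = 1 ∨ (x - a) % 3 = 2 := by omega
  rcases h3 with h | h | h
  · have h1 : (x - 2 - a) % 3 = 1 := by omega
    have h2 : (x - 1 - a) % 3 = 2 := by omega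
    simp only [pat, h, h1, h2]
    norm_num
    revert A B; decide
  · have h1 : (x - 2 - a) % 3 = 2 := by omega
    have h2 : (x - 1 - a) % 3 = 0 := by omega
    simp only [pat, h, h1, h2]
    norm_num
    revert A B; decide
  · have h1 : (x - 2 - a) % 3 = 0 := by omega
    have h2 : (x - 1 - a) % 3 = 1 := by omega
    simp only [pat, h, h1, h2]
    norm_num

theorem predecessor_of_zeros (lam0 : Config) (t : ℕ) (ht : 1 ≤ t) (a b : ℤ) (hab : a ≤ b)
    (h0 : ∀ x : ℤ, a ≤ x → x ≤ b → evol lam0 t x = 0)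
    (h1 : ∃ x : ℤ, a - 1 ≤ x ∧ x ≤ b + 1 ∧ evol lam0 (t - 1) x ≠ 0) :
    ∃ s : ℤ, 0 ≤ s ∧ s < 3 ∧ ∀ x : ℤ, a - 1 ≤ x → x ≤ b + 1 →
      (evol lam0 (t - 1) x = 1 ↔ (x - s) % 3 = 0 ∨ (x - s) % 3 = 1) := by
  obtain ⟨n, rfl⟩ : ∃ n, t = n + 1 := ⟨t - 1, (Nat.succ_pred_eq_of_pos ht).symm⟩
  simp only [Nat.add_sub_cancel] at h1 ⊢
  set g := evol lam0 n with hg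
  have hstep : ∀ x : ℤ, evol lam0 (n + 1) x = g (x - 1) + g x + g (x + 1) := by
    intro x
    rw [evol, Function.iterate_succ_apply']
    rfl
  have hchar : ∀ u v w : ZMod 2, u + v + w = 0 → w = u + v := by decide
  have hrec : ∀ x : ℤ, a + 1 ≤ x → x ≤ b + 1 → g x = g (x - 2) + g (x - 1) := by
    intro x hx1 hx2
    have h := h0 (x - 1) (by omega) (by omega)
    rw [hstep] at h
    have h' : g (x - 2) + g (x - 1) + g x = 0 := by
      have e1 : x - 1 - 1 = x - 2 := by ring
      have e2 : x - 1 + 1 = x := by ring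
      rwa [e1, e2] at h
    exact hchar _ _ _ h'
  set A := g (a - 1) with hA
  set B := g a with hB
  have key : ∀ m : ℕ, ∀ x : ℤ, x = a - 1 + m → x ≤ b + 1 → g x = pat (a - 1) A B x := by
    intro m
    induction m using Nat.strong_induction_on with
    | _ m ih =>
      intro x hx hxb
      match m, hx with
      | 0, hx =>
        have hx0 : x = a - 1 := by omega
        rw [hx0]
        simpa [pat] using hA.symm
      | 1, hx =>
        have hx0 : x = a := by omega
        rw [hx0]
        have h1 : (a - (a - 1)) % 3 = 1 := by omega
        simpa [pat, h1] using hB.symm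
      | (k + 2), hx =>
        have e1 := ih k (by omega) (x - 2) (by push_cast at hx ⊢; omega) (by omega)
        have e2 := ih (k + 1) (by omega) (x - 1) (by push_cast at hx ⊢; omega) (by omega)
        have hxr : g x = g (x - 2) + g (x - 1) := by
          apply hrec x (by push_cast at hx; omega) hxb
        rw [hxr, e1, e2, pat_rec]
  have hval : ∀ v : ZMod 2, v = 0 ∨ v = 1 := by decide
  have gpat : ∀ x : ℤ, a - 1 ≤ x → x ≤ b + 1 → g x = pat (a - 1) A B x := by
    intro x hxa hxb
    exact key (x - (a - 1)).toNat x (by omega) hxb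
  obtain ⟨x0, hx0a, hx0b, hx0ne⟩ := h1
  have hx0 : pat (a - 1) A B x0 ≠ 0 := by rw [← gpat x0 hx0a hx0b]; exact hx0ne
  have hnz : ¬ (A = 0 ∧ B = 0) := by
    rintro ⟨h1, h2⟩
    apply hx0
    simp [pat, h1, h2]
  rcases hval A with hA0 | hA1 <;> rcases hval B with hB0 | hB1
  · exact absurd ⟨hA0, hB0⟩ hnz
  · -- A = 0, B = 1 : ones at r = 1, 2 ; s = a % 3
    refine ⟨a % 3, by omega, by omega, ?_⟩
    intro x hxa hxb
    rw [gpat x hxa hxb, hA0, hB1]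
    have h3 : (x - (a - 1)) % 3 = 0 ∨ (x - (a - 1)) % 3 = 1 ∨ (x - (a - 1)) % 3 = 2 := by omega
    rcases h3 with h | h | h <;> simp only [pat, h] <;> norm_num <;> omega
  · -- A = 1, B = 0 : ones at r = 0, 2 ; s = (a + 1) % 3
    refine ⟨(a + 1) % 3, by omega, by omega, ?_⟩
    intro x hxa hxb
    rw [gpat x hxa hxb, hA1, hB0]
    have h3 : (x - (a - 1)) % 3 = 0 ∨ (x - (a - 1)) % 3 = 1 ∨ (x - (a - 1)) % 3 = 2 := by omega
    rcases h3 with h | h | h <;> simp only [pat, h] <;> norm_num <;> omega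
  · -- A = 1, B = 1 : ones at r = 0, 1 ; s = (a - 1) % 3
    refine ⟨(a - 1) % 3, by omega, by omega, ?_⟩
    intro x hxa hxb
    rw [gpat x hxa hxb, hA1, hB1]
    have h3 : (x - (a - 1)) % 3 = 0 ∨ (x - (a - 1)) % 3 = 1 ∨ (x - (a - 1)) % 3 = 2 := by omega
    have e11 : (1 : ZMod 2) + 1 = 0 := by decide
    rcases h3 with h | h | h <;> simp only [pat, h, e11] <;> norm_num <;> omega
end

section
/- Subcritical percolation of empty diagonal paths: let the initial configuration λ_0 of the '1 Or 3' cellular automaton be i.i.d. fair bits on all of ℤ. There is an absolute constant c > 0 such that for every t > 0, the probability that there exists a diagonal path (x_0,0), (x_1,1), …, (x_t,t) = (0,t) with |x_{i+1} − x_i| = 1 for all i and λ(x_i, i) = 0 for all i, is less than e^{−ct}. -/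
open MeasureTheory

/-- The random variables `X x`, `x ∈ K`, are i.i.d. fair bits under `μ`:
every finite cylinder event indexed inside `K` has the product probability. -/
def IIDFairOn {Ω : Type*} [MeasurableSpace Ω] (μ : Measure Ω)
    (X : Ω → Config) (K : Set ℤ) : Prop :=
  ∀ S : Finset ℤ, ↑S ⊆ K → ∀ v : ℤ → ZMod 2,
    μ {ω | ∀ x ∈ S, X ω x = v x} = (2 : ENNReal)⁻¹ ^ S.card

namespace Sub

/-- delta function at b -/
def delta (b : ℤ) : Config := fun x => if x = b then 1 else 0

lemma evol_zero (f : Config) : evol f 0 = f := rfl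

lemma evol_succ (f : Config) (t : ℕ) (x : ℤ) :
    evol f (t + 1) x = evol f t (x - 1) + evol f t x + evol f t (x + 1) := by
  show (step^[t+1] f) x = _
  rw [Function.iterate_succ_apply']
  rfl

lemma evol_add (f g : Config) (t : ℕ) (x : ℤ) :
    evol (fun y => f y + g y) t x = evol f t x + evol g t x := by
  induction t generalizing x with
  | zero => rfl
  | succ n ih => simp only [evol_succ, ih]; ring

lemma evol_congr (t : ℕ) (f g : Config) (x : ℤ)
    (h : ∀ y : ℤ, x - t ≤ y → y ≤ x + t → f y = g y) :
    evol f t x = evol g t x := by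
  induction t generalizing x with
  | zero => exact h x (by simp) (by simp)
  | succ n ih =>
    rw [evol_succ, evol_succ, ih (x-1) (fun y h1 h2 => h y (by push_cast at *; omega) (by push_cast at *; omega)),
        ih x (fun y h1 h2 => h y (by push_cast at *; omega) (by push_cast at *; omega)),
        ih (x+1) (fun y h1 h2 => h y (by push_cast at *; omega) (by push_cast at *; omega))]

lemma evol_delta_right (b : ℤ) (t : ℕ) (x : ℤ) (h : b + t < x) :
    evol (delta b) t x = 0 := by
  induction t generalizing x with
  | zero => simp [delta, evol_zero]; omega
  | succ n ih =>
    rw [evol_succ, ih (x-1) (by push_cast at *; omega), ih x (by push_cast at *; omega),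
        ih (x+1) (by push_cast at *; omega)]
    ring

lemma evol_delta_left (b : ℤ) (t : ℕ) (x : ℤ) (h : x < b - t) :
    evol (delta b) t x = 0 := by
  induction t generalizing x with
  | zero => simp [delta, evol_zero]; omega
  | succ n ih =>
    rw [evol_succ, ih (x-1) (by push_cast at *; omega), ih x (by push_cast at *; omega),
        ih (x+1) (by push_cast at *; omega)]
    ring

lemma evol_delta_edge_right (b : ℤ) (t : ℕ) :
    evol (delta b) t (b + t) = 1 := by
  induction t with
  | zero => simp [delta, evol_zero]
  | succ n ih =>
    have e1 : (b + ((n+1:ℕ)) : ℤ) - 1 = b + (n:ℤ) := by push_cast; ring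
    rw [evol_succ, e1, ih, evol_delta_right b n (b + (n+1 : ℕ)) (by push_cast; omega),
        evol_delta_right b n ((b + (n+1 : ℕ)) + 1) (by push_cast; omega)]
    ring

lemma evol_delta_edge_left (b : ℤ) (t : ℕ) :
    evol (delta b) t (b - t) = 1 := by
  induction t with
  | zero => simp [delta, evol_zero]
  | succ n ih =>
    have e1 : (b - ((n+1:ℕ)) : ℤ) + 1 = b - (n:ℤ) := by push_cast; ring
    rw [evol_succ, e1, ih, evol_delta_left b n (b - (n+1 : ℕ)) (by push_cast; omega),
        evol_delta_left b n ((b - (n+1 : ℕ)) - 1) (by push_cast; omega)]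
    ring


def reachable (f : Config) (t : ℕ) (x : ℤ) : Prop :=
  ∃ π : ℕ → ℤ, π t = x ∧ (∀ i < t, |π (i + 1) - π i| = 1) ∧
    ∀ i ≤ t, evol f i (π i) = 0

lemma path_bound {π : ℕ → ℤ} {t : ℕ} (hs : ∀ i < t, |π (i + 1) - π i| = 1) :
    ∀ d i, i + d ≤ t → |π i - π (i + d)| ≤ (d : ℤ) := by
  intro d
  induction d with
  | zero => intro i _; simp
  | succ n ih =>
    intro i h
    have h1 : |π i - π (i + n)| ≤ (n : ℤ) := ih i (by omega)
    have h2 : |π (i + n + 1) - π (i + n)| = 1 := hs (i + n) (by omega)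
    have : π i - π (i + (n+1)) = (π i - π (i + n)) - (π (i + n + 1) - π (i + n)) := by
      have : i + (n+1) = i + n + 1 := by omega
      rw [this]; ring
    rw [this]
    calc |(π i - π (i + n)) - (π (i + n + 1) - π (i + n))|
        ≤ |π i - π (i + n)| + |π (i + n + 1) - π (i + n)| := abs_sub _ _
      _ ≤ (n : ℤ) + 1 := by omega
      _ = ((n+1 : ℕ) : ℤ) := by push_cast; ring

lemma reachable_congr {t : ℕ} {x : ℤ} {f g : Config}
    (h : ∀ y : ℤ, x - t ≤ y → y ≤ x + t → f y = g y) :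
    reachable f t x → reachable g t x := by
  rintro ⟨π, hend, hs, hz⟩
  refine ⟨π, hend, hs, fun i hi => ?_⟩
  rw [← hz i hi]
  apply evol_congr
  intro y h1 h2
  have hb : |π i - π (i + (t - i))| ≤ ((t - i : ℕ) : ℤ) := path_bound hs (t-i) i (by omega)
  have : i + (t - i) = t := by omega
  rw [this, hend] at hb
  have hb' : |π i - x| ≤ (t : ℤ) - i := by
    have : ((t - i : ℕ) : ℤ) = (t : ℤ) - i := by omega
    omega
  rw [abs_le] at hb'
  apply (h y (by omega) (by omega)).symm

lemma reachable_step (f : Config) (t : ℕ) (x : ℤ) :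
    reachable f (t+1) x ↔
      (evol f (t+1) x = 0 ∧ (reachable f t (x-1) ∨ reachable f t (x+1))) := by
  constructor
  · rintro ⟨π, hend, hs, hz⟩
    have hstep : |π (t+1) - π t| = 1 := hs t (by omega)
    rw [hend] at hstep
    refine ⟨by rw [← hend]; exact hz (t+1) le_rfl, ?_⟩
    rcases (abs_eq (by norm_num : (0:ℤ) ≤ 1)).1 hstep with h | h
    · left
      exact ⟨π, by omega, fun i hi => hs i (by omega), fun i hi => hz i (by omega)⟩
    · right
      exact ⟨π, by omega, fun i hi => hs i (by omega), fun i hi => hz i (by omega)⟩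
  · rintro ⟨hev, h | h⟩ <;> obtain ⟨π, hend, hs, hz⟩ := h
    · refine ⟨fun i => if i = t+1 then x else π i, by simp, fun i hi => ?_, fun i hi => ?_⟩
      · show |(if i+1 = t+1 then x else π (i+1)) - (if i = t+1 then x else π i)| = 1
        by_cases hit : i = t
        · rw [if_pos (by omega), if_neg (by omega), hit, hend]
          rw [abs_eq (by norm_num : (0:ℤ) ≤ 1)]; left; ring
        · rw [if_neg (by omega), if_neg (by omega)]
          exact hs i (by omega)
      · show evol f i (if i = t+1 then x else π i) = 0
        by_cases hit : i = t+1
        · rw [if_pos hit, hit]; exact hev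
        · rw [if_neg hit]; exact hz i (by omega)
    · refine ⟨fun i => if i = t+1 then x else π i, by simp, fun i hi => ?_, fun i hi => ?_⟩
      · show |(if i+1 = t+1 then x else π (i+1)) - (if i = t+1 then x else π i)| = 1
        by_cases hit : i = t
        · rw [if_pos (by omega), if_neg (by omega), hit, hend]
          rw [abs_eq (by norm_num : (0:ℤ) ≤ 1)]; right; ring
        · rw [if_neg (by omega), if_neg (by omega)]
          exact hs i (by omega)
      · show evol f i (if i = t+1 then x else π i) = 0
        by_cases hit : i = t+1
        · rw [if_pos hit, hit]; exact hev
        · rw [if_neg hit]; exact hz i (by omega)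

lemma reachable_zero (f : Config) (x : ℤ) : reachable f 0 x ↔ f x = 0 := by
  constructor
  · rintro ⟨π, hend, _, hz⟩
    have := hz 0 le_rfl
    rwa [hend] at this
  · intro h
    exact ⟨fun _ => x, rfl, fun i hi => by omega, fun i hi => by
      interval_cases i; exact h⟩

lemma evol_shift (f : Config) (a : ℤ) (t : ℕ) (x : ℤ) :
    evol (fun y => f (y + a)) t x = evol f t (x + a) := by
  induction t generalizing x with
  | zero => rfl
  | succ n ih =>
    rw [evol_succ, evol_succ, ih, ih, ih]
    congr 2 <;> ring_nf

lemma reachable_shift (f : Config) (a : ℤ) (t : ℕ) (x : ℤ) :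
    reachable (fun y => f (y + a)) t x ↔ reachable f t (x + a) := by
  constructor
  · rintro ⟨π, hend, hs, hz⟩
    refine ⟨fun i => π i + a, by show π t + a = x + a; rw [hend], fun i hi => by
      have := hs i hi; convert this using 2; ring, fun i hi => ?_⟩
    have := hz i hi
    rwa [evol_shift] at this
  · rintro ⟨π, hend, hs, hz⟩
    refine ⟨fun i => π i - a, by show π t - a = x; omega, fun i hi => by
      have := hs i hi; convert this using 2; ring, fun i hi => ?_⟩
    rw [evol_shift]
    have : π i - a + a = π i := by ring
    rw [this]
    exact hz i hi



/-! ### Counting layer -/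

def extA (S : Finset ℤ) (γ : {x : ℤ // x ∈ S} → ZMod 2) : Config :=
  fun x => if h : x ∈ S then γ ⟨x, h⟩ else 0

def DepOn (P : Config → Prop) (S : Finset ℤ) : Prop :=
  ∀ f g : Config, (∀ x ∈ S, f x = g x) → (P f ↔ P g)

lemma DepOn.mono {P : Config → Prop} {S T : Finset ℤ} (h : DepOn P S) (hST : S ⊆ T) :
    DepOn P T := fun f g hfg => h f g fun x hx => hfg x (hST hx)

open scoped Classical in
noncomputable def cnt (S : Finset ℤ) (P : Config → Prop) : ℕ :=
  (Finset.univ.filter fun γ : {x : ℤ // x ∈ S} → ZMod 2 => P (extA S γ)).card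


lemma zmod2_add_one_iff : ∀ a : ZMod 2, (a + 1 = 0 ↔ ¬ a = 0) := by decide

lemma zmod2_add_add : ∀ a : ZMod 2, a + 1 + 1 = a := by decide

def flipA (S : Finset ℤ) (b : ℤ) (γ : {x : ℤ // x ∈ S} → ZMod 2) :
    {x : ℤ // x ∈ S} → ZMod 2 :=
  fun z => if (z : ℤ) = b then γ z + 1 else γ z

section CntLemmas

lemma cnt_eq (S : Finset ℤ) (P : Config → Prop)
    [DecidablePred fun γ : {x : ℤ // x ∈ S} → ZMod 2 => P (extA S γ)] :
    cnt S P = (Finset.univ.filter fun γ : {x : ℤ // x ∈ S} → ZMod 2 => P (extA S γ)).card := by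
  unfold cnt
  congr 1
  apply Finset.filter_congr_decidable

lemma cnt_split (S : Finset ℤ) (P Q : Config → Prop) :
    cnt S P = cnt S (fun f => P f ∧ Q f) + cnt S (fun f => P f ∧ ¬ Q f) := by
  classical
  rw [cnt_eq, cnt_eq, cnt_eq]
  rw [← Finset.card_filter_add_card_filter_not
    (p := fun γ : {x : ℤ // x ∈ S} → ZMod 2 => Q (extA S γ))]
  rw [Finset.filter_filter, Finset.filter_filter]

lemma cnt_congr (S : Finset ℤ) (P Q : Config → Prop) (h : ∀ f, P f ↔ Q f) :
    cnt S P = cnt S Q := by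
  classical
  rw [cnt_eq, cnt_eq]
  congr 1
  exact Finset.filter_congr fun γ _ => h _

lemma extA_flip (S : Finset ℤ) (b : ℤ) (hb : b ∈ S) (γ : {x : ℤ // x ∈ S} → ZMod 2) :
    extA S (flipA S b γ) = fun x => extA S γ x + delta b x := by
  funext x
  by_cases hx : x ∈ S
  · simp only [extA, flipA, dif_pos hx]
    by_cases hxb : x = b
    · rw [if_pos hxb, delta, if_pos hxb]
    · rw [if_neg hxb, delta, if_neg hxb, add_zero]
  · have hxb : ¬ x = b := fun hc => hx (hc ▸ hb)
    simp only [extA, dif_neg hx, delta, if_neg hxb, add_zero]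

lemma cnt_fresh (S : Finset ℤ) (b : ℤ) (hb : b ∈ S) (P Q : Config → Prop)
    (hP : DepOn P (S.erase b))
    (hTog : ∀ f : Config, (Q (fun x => f x + delta b x) ↔ ¬ Q f)) :
    cnt S P = 2 * cnt S (fun f => P f ∧ Q f) := by
  classical
  rw [cnt_split S P Q]
  have key : ∀ γ : {x : ℤ // x ∈ S} → ZMod 2,
      (P (extA S (flipA S b γ)) ↔ P (extA S γ))
      ∧ (Q (extA S (flipA S b γ)) ↔ ¬ Q (extA S γ)) := by
    intro γ
    constructor
    · apply hP
      intro x hx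
      obtain ⟨hxb, hxS⟩ := Finset.mem_erase.1 hx
      rw [extA_flip S b hb γ]
      show extA S γ x + delta b x = extA S γ x
      rw [delta, if_neg hxb, add_zero]
    · rw [extA_flip S b hb γ]
      exact hTog _
  have hinv : ∀ γ : {x : ℤ // x ∈ S} → ZMod 2, flipA S b (flipA S b γ) = γ := by
    intro γ
    funext z
    by_cases hz : (z : ℤ) = b
    · simp only [flipA, if_pos hz]; exact zmod2_add_add _
    · simp only [flipA, if_neg hz]
  have hbij : cnt S (fun f => P f ∧ ¬ Q f) = cnt S (fun f => P f ∧ Q f) := by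
    rw [cnt_eq, cnt_eq]
    refine Finset.card_bij' (fun γ _ => flipA S b γ) (fun γ _ => flipA S b γ)
      ?_ ?_ ?_ ?_
    · intro γ hγ
      have h1 := (Finset.mem_filter.1 hγ).2.1
      have h2 := (Finset.mem_filter.1 hγ).2.2
      refine Finset.mem_filter.2 ⟨Finset.mem_univ _, (key γ).1.2 h1, ?_⟩
      rw [(key γ).2]
      exact h2
    · intro γ hγ
      have h1 := (Finset.mem_filter.1 hγ).2.1
      have h2 := (Finset.mem_filter.1 hγ).2.2
      refine Finset.mem_filter.2 ⟨Finset.mem_univ _, (key γ).1.2 h1, ?_⟩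
      intro hc
      exact ((key γ).2.1 hc) h2
    · intro γ _; exact hinv γ
    · intro γ _; exact hinv γ
  rw [hbij]
  ring

end CntLemmas

section Meas

variable {Ω : Type} [MeasurableSpace Ω] (μ : Measure Ω) (init : Ω → Config)

lemma cyl_meas [IsProbabilityMeasure μ] (h : IIDFairOn μ init Set.univ)
    (S : Finset ℤ) (P : Config → Prop) (hP : DepOn P S) :
    μ {ω | P (init ω)} = (cnt S P) * (2 : ENNReal)⁻¹ ^ S.card := by
  classical
  set q : ENNReal := (2:ENNReal)⁻¹ ^ S.card with hq
  have hcyl : ∀ γ : {x : ℤ // x ∈ S} → ZMod 2,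
      μ {ω | ∀ x ∈ S, init ω x = extA S γ x} = q := fun γ =>
    h S (Set.subset_univ _) (extA S γ)
  have hres : ∀ ω : Ω, ∀ x ∈ S, init ω x = extA S (fun z => init ω z.1) x := by
    intro ω x hx; simp [extA, hx]
  set good := (Finset.univ.filter fun γ : {x : ℤ // x ∈ S} → ZMod 2 => P (extA S γ))
    with hgood
  set bad := (Finset.univ.filter fun γ : {x : ℤ // x ∈ S} → ZMod 2 => ¬ P (extA S γ))
    with hbad
  have hcntP : cnt S P = good.card := by
    rw [hgood]; rfl
  have hEsub : {ω | P (init ω)} ⊆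
      ⋃ γ ∈ good, {ω | ∀ x ∈ S, init ω x = extA S γ x} := by
    intro ω hω
    have hmem : (fun z : {x : ℤ // x ∈ S} => init ω z.1) ∈ good := by
      rw [hgood]
      exact Finset.mem_filter.2 ⟨Finset.mem_univ _, (hP _ _ (hres ω)).1 hω⟩
    exact Set.mem_biUnion hmem (fun x hx => hres ω x hx)
  have hEcsub : {ω | P (init ω)}ᶜ ⊆
      ⋃ γ ∈ bad, {ω | ∀ x ∈ S, init ω x = extA S γ x} := by
    intro ω hω
    have hmem : (fun z : {x : ℤ // x ∈ S} => init ω z.1) ∈ bad := by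
      rw [hbad]
      exact Finset.mem_filter.2 ⟨Finset.mem_univ _, fun hc => hω ((hP _ _ (hres ω)).2 hc)⟩
    exact Set.mem_biUnion hmem (fun x hx => hres ω x hx)
  have hub : μ {ω | P (init ω)} ≤ good.card * q := by
    refine le_trans (measure_mono hEsub) (le_trans (measure_biUnion_finset_le _ _) ?_)
    rw [Finset.sum_congr rfl (fun γ _ => hcyl γ), Finset.sum_const, nsmul_eq_mul]
  have hubc : μ {ω | P (init ω)}ᶜ ≤ bad.card * q := by
    refine le_trans (measure_mono hEcsub) (le_trans (measure_biUnion_finset_le _ _) ?_)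
    rw [Finset.sum_congr rfl (fun γ _ => hcyl γ), Finset.sum_const, nsmul_eq_mul]
  have hcardsum : good.card + bad.card = 2 ^ S.card := by
    rw [hgood, hbad]
    rw [Finset.card_filter_add_card_filter_not]
    simp [Fintype.card_fun, Fintype.card_coe]
  have htotal : ((good.card : ENNReal)) * q + (bad.card) * q = 1 := by
    rw [← add_mul, hq]
    rw [show ((good.card : ENNReal) + bad.card) = ((good.card + bad.card : ℕ) : ENNReal) by push_cast; ring]
    rw [hcardsum]
    push_cast
    rw [← mul_pow, ENNReal.mul_inv_cancel (by norm_num) (by norm_num), one_pow]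
  have hbne : (bad.card : ENNReal) * q ≠ ⊤ := by
    apply ENNReal.mul_ne_top (by simp)
    rw [hq]
    exact ENNReal.pow_ne_top (by simp)
  have hlb : (good.card : ENNReal) * q ≤ μ {ω | P (init ω)} := by
    have h1 : (1:ENNReal) ≤ μ {ω | P (init ω)} + μ {ω | P (init ω)}ᶜ := by
      rw [← measure_univ (μ := μ), ← Set.union_compl_self {ω | P (init ω)}]
      exact measure_union_le _ _
    have h2 : (good.card : ENNReal) * q + (bad.card) * q ≤
        μ {ω | P (init ω)} + (bad.card) * q := by
      rw [htotal]
      exact le_trans h1 (add_le_add_right hubc _)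
    exact (ENNReal.add_le_add_iff_right hbne).1 h2
  rw [hcntP]
  exact le_antisymm hub hlb

variable [IsProbabilityMeasure μ]

lemma meas_fresh (hiid : IIDFairOn μ init Set.univ) (S : Finset ℤ) (b : ℤ) (hb : b ∈ S) (P Q : Config → Prop)
    (hP : DepOn P (S.erase b)) (hQ : DepOn Q S)
    (hTog : ∀ f : Config, (Q (fun x => f x + delta b x) ↔ ¬ Q f)) :
    μ {ω | P (init ω) ∧ Q (init ω)} = 2⁻¹ * μ {ω | P (init ω)} := by
  have hPS : DepOn P S := hP.mono (Finset.erase_subset _ _)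
  have hPQ : DepOn (fun f => P f ∧ Q f) S := fun f g hfg =>
    and_congr (hPS f g hfg) (hQ f g hfg)
  rw [cyl_meas μ init hiid S _ hPQ, cyl_meas μ init hiid S P hPS,
      cnt_fresh S b hb P Q hP hTog]
  push_cast
  rw [← mul_assoc, ← mul_assoc, ENNReal.inv_mul_cancel (by norm_num) (by norm_num), one_mul]

lemma meas_IE (hiid : IIDFairOn μ init Set.univ) (S : Finset ℤ) (P Q : Config → Prop)
    (hP : DepOn P S) (hQ : DepOn Q S) :
    μ {ω | P (init ω) ∨ Q (init ω)} + μ {ω | P (init ω) ∧ Q (init ω)}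
      = μ {ω | P (init ω)} + μ {ω | Q (init ω)} := by
  classical
  have hor : DepOn (fun f => P f ∨ Q f) S := fun f g hfg =>
    or_congr (hP f g hfg) (hQ f g hfg)
  have hand : DepOn (fun f => P f ∧ Q f) S := fun f g hfg =>
    and_congr (hP f g hfg) (hQ f g hfg)
  rw [cyl_meas μ init hiid S _ hor, cyl_meas μ init hiid S _ hand,
      cyl_meas μ init hiid S P hP, cyl_meas μ init hiid S Q hQ]
  have hcard : cnt S (fun f => P f ∨ Q f) + cnt S (fun f => P f ∧ Q f)
      = cnt S P + cnt S Q := by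
    rw [cnt_eq, cnt_eq, cnt_eq, cnt_eq, Finset.filter_or, Finset.filter_and]
    exact Finset.card_union_add_card_inter _ _
  rw [← add_mul, ← add_mul]
  rw [show ((cnt S fun f => P f ∨ Q f) : ENNReal) + (cnt S fun f => P f ∧ Q f)
      = ((cnt S (fun f => P f ∨ Q f) + cnt S (fun f => P f ∧ Q f) : ℕ) : ENNReal) by push_cast; ring]
  rw [hcard]
  push_cast
  ring

lemma depOn_reachable (t : ℕ) (x : ℤ) :
    DepOn (fun f => reachable f t x) (Finset.Icc (x - t) (x + t)) := by
  intro f g hfg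
  constructor
  · apply reachable_congr
    intro y h1 h2
    exact hfg y (Finset.mem_Icc.2 ⟨h1, h2⟩)
  · apply reachable_congr
    intro y h1 h2
    exact (hfg y (Finset.mem_Icc.2 ⟨h1, h2⟩)).symm

lemma depOn_evol (t : ℕ) (x : ℤ) :
    DepOn (fun f => evol f t x = 0) (Finset.Icc (x - t) (x + t)) := by
  intro f g hfg
  have : evol f t x = evol g t x :=
    evol_congr t f g x (fun y h1 h2 => hfg y (Finset.mem_Icc.2 ⟨h1, h2⟩))
  show evol f t x = 0 ↔ evol g t x = 0
  rw [this]

lemma memS1' (t : ℕ) (x z : ℤ) (hz : z ∈ Finset.Icc (0 - (t:ℤ)) (0 + t)) :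
    z + x ∈ Finset.Icc (x - t) (x + t) := by
  rw [Finset.mem_Icc] at *; omega

lemma memS0' (t : ℕ) (x z : ℤ) (hz : z ∈ Finset.Icc (x - (t:ℤ)) (x + t)) :
    z - x ∈ Finset.Icc (0 - (t:ℤ)) (0 + t) := by
  rw [Finset.mem_Icc] at *; omega

def shMap (t : ℕ) (x : ℤ)
    (γ : {y : ℤ // y ∈ Finset.Icc (x - (t:ℤ)) (x + t)} → ZMod 2) :
    {y : ℤ // y ∈ Finset.Icc (0 - (t:ℤ)) (0 + t)} → ZMod 2 :=
  fun z => γ ⟨z.1 + x, memS1' t x z.1 z.2⟩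

def shMapInv (t : ℕ) (x : ℤ)
    (γ : {y : ℤ // y ∈ Finset.Icc (0 - (t:ℤ)) (0 + t)} → ZMod 2) :
    {y : ℤ // y ∈ Finset.Icc (x - (t:ℤ)) (x + t)} → ZMod 2 :=
  fun z => γ ⟨z.1 - x, memS0' t x z.1 z.2⟩

lemma meas_reach_trans (hiid : IIDFairOn μ init Set.univ) (t : ℕ) (x : ℤ) :
    μ {ω | reachable (init ω) t x} = μ {ω | reachable (init ω) t 0} := by
  classical
  rw [cyl_meas μ init hiid _ _ (depOn_reachable t x),
      cyl_meas μ init hiid _ _ (depOn_reachable t 0)]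
  have hcardeq : (Finset.Icc (x - t) (x + t)).card = (Finset.Icc (0 - (t:ℤ)) (0 + t)).card := by
    rw [Int.card_Icc, Int.card_Icc]
    congr 1
    ring
  rw [hcardeq]
  congr 1
  rw [cnt_eq, cnt_eq]
  refine congrArg (Nat.cast : ℕ → ENNReal) ?_
  refine Finset.card_bij' (fun γ _ => shMap t x γ) (fun γ _ => shMapInv t x γ) ?_ ?_ ?_ ?_
  · intro γ hγ
    have h1 := (Finset.mem_filter.1 hγ).2
    refine Finset.mem_filter.2 ⟨Finset.mem_univ _, ?_⟩
    have h2 : reachable (fun y => extA _ γ (y + x)) t 0 := by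
      rw [reachable_shift (extA _ γ) x t 0]
      have e : (0:ℤ) + x = x := by ring
      rw [e]
      exact h1
    apply reachable_congr (t := t) (x := 0)
      (f := fun y => extA (Finset.Icc (x - t) (x + t)) γ (y + x)) ?_ h2
    intro y h1' h2'
    have hy : y ∈ Finset.Icc (0 - (t:ℤ)) (0 + t) := Finset.mem_Icc.2 ⟨by omega, by omega⟩
    have hyx : y + x ∈ Finset.Icc (x - (t:ℤ)) (x + t) := memS1' t x y hy
    show extA _ γ (y + x) = extA _ (shMap t x γ) y
    rw [extA, extA, dif_pos hyx, dif_pos hy]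
    rfl
  · intro γ hγ
    have h1 := (Finset.mem_filter.1 hγ).2
    refine Finset.mem_filter.2 ⟨Finset.mem_univ _, ?_⟩
    have h2 : reachable (fun y => extA _ γ (y + -x)) t x := by
      rw [reachable_shift (extA _ γ) (-x) t x]
      have e : x + -x = (0:ℤ) := by ring
      rw [e]
      exact h1
    apply reachable_congr (t := t) (x := x)
      (f := fun y => extA (Finset.Icc (0 - (t:ℤ)) (0 + t)) γ (y + -x)) ?_ h2
    intro y h1' h2'
    have hy : y ∈ Finset.Icc (x - (t:ℤ)) (x + t) := Finset.mem_Icc.2 ⟨by omega, by omega⟩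
    have hyx : y + -x ∈ Finset.Icc (0 - (t:ℤ)) (0 + t) := by
      have h := memS0' t x y hy
      have e : y - x = y + -x := by ring
      rwa [e] at h
    show extA _ γ (y + -x) = extA _ (shMapInv t x γ) y
    rw [extA, extA, dif_pos hyx, dif_pos hy]
    show γ ⟨y + -x, hyx⟩ = γ ⟨y - x, memS0' t x y hy⟩
    congr 1
  · intro γ _
    funext z
    show γ ⟨z.1 - x + x, _⟩ = γ z
    congr 1
    exact Subtype.ext (by push_cast; ring)
  · intro γ _
    funext z
    show γ ⟨z.1 + x - x, _⟩ = γ z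
    congr 1
    exact Subtype.ext (by push_cast; ring)

end Meas
lemma DepOn.and {P Q : Config → Prop} {S : Finset ℤ} (hP : DepOn P S) (hQ : DepOn Q S) :
    DepOn (fun f => P f ∧ Q f) S := fun f g hfg => and_congr (hP f g hfg) (hQ f g hfg)

lemma toggle_bit (T : ℕ) (x b : ℤ) (hb : b = x + T ∨ b = x - T) :
    ∀ f : Config, (evol (fun y => f y + delta b y) T x = 0 ↔ ¬ evol f T x = 0) := by
  intro f
  have hone : evol (delta b) T x = 1 := by
    rcases hb with h | h
    · have h2 := evol_delta_edge_left b T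
      rw [show b - (T:ℤ) = x by omega] at h2; exact h2
    · have h2 := evol_delta_edge_right b T
      rw [show b + (T:ℤ) = x by omega] at h2; exact h2
  rw [evol_add, hone]
  exact zmod2_add_one_iff _

noncomputable def Dm {Ω : Type} [MeasurableSpace Ω] (μ : Measure Ω) (init : Ω → Config)
    (t : ℕ) : ENNReal := μ {ω | reachable (init ω) t 0}

section Rec

variable {Ω : Type} [MeasurableSpace Ω] (μ : Measure Ω) (init : Ω → Config)
variable [IsProbabilityMeasure μ]

lemma half_add_half (x : ENNReal) : 2⁻¹ * x + 2⁻¹ * x = x := by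
  rw [← add_mul, ← two_mul, ENNReal.mul_inv_cancel (by norm_num) (by norm_num), one_mul]

lemma inv8 (x : ENNReal) : 2⁻¹ * (2⁻¹ * (2⁻¹ * x)) = 8⁻¹ * x := by
  rw [← mul_assoc, ← mul_assoc]
  congr 1
  rw [← ENNReal.mul_inv (by norm_num) (by norm_num),
      ← ENNReal.mul_inv (by norm_num) (by norm_num)]
  norm_num

lemma rec_step (hiid : IIDFairOn μ init Set.univ) (n : ℕ) :
    Dm μ init (n+2) + 8⁻¹ * Dm μ init n ≤ Dm μ init (n+1) := by
  classical
  -- measures of the two one-step events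
  have hEp : μ {ω | reachable (init ω) (n+1) 1 ∧ evol (init ω) (n+2) 0 = 0}
      = 2⁻¹ * Dm μ init (n+1) := by
    have h1 := meas_fresh μ init hiid (Finset.Icc (-(n:ℤ)-2) ((n:ℤ)+2)) (-(n:ℤ)-2)
      (by rw [Finset.mem_Icc]; omega)
      (fun f => reachable f (n+1) 1) (fun f => evol f (n+2) 0 = 0)
      ((depOn_reachable (n+1) 1).mono (by
        intro y hy
        rw [Finset.mem_Icc] at hy
        rw [Finset.mem_erase, Finset.mem_Icc]
        push_cast at hy ⊢
        omega))
      ((depOn_evol (n+2) 0).mono (by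
        intro y hy
        rw [Finset.mem_Icc] at hy
        rw [Finset.mem_Icc]
        push_cast at hy ⊢
        omega))
      (toggle_bit (n+2) 0 (-(n:ℤ)-2) (Or.inr (by push_cast; ring)))
    rw [h1, meas_reach_trans μ init hiid (n+1) 1]
    rfl
  have hEm : μ {ω | reachable (init ω) (n+1) (-1) ∧ evol (init ω) (n+2) 0 = 0}
      = 2⁻¹ * Dm μ init (n+1) := by
    have h1 := meas_fresh μ init hiid (Finset.Icc (-(n:ℤ)-2) ((n:ℤ)+2)) ((n:ℤ)+2)
      (by rw [Finset.mem_Icc]; omega)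
      (fun f => reachable f (n+1) (-1)) (fun f => evol f (n+2) 0 = 0)
      ((depOn_reachable (n+1) (-1)).mono (by
        intro y hy
        rw [Finset.mem_Icc] at hy
        rw [Finset.mem_erase, Finset.mem_Icc]
        push_cast at hy ⊢
        omega))
      ((depOn_evol (n+2) 0).mono (by
        intro y hy
        rw [Finset.mem_Icc] at hy
        rw [Finset.mem_Icc]
        push_cast at hy ⊢
        omega))
      (toggle_bit (n+2) 0 ((n:ℤ)+2) (Or.inl (by push_cast; ring)))
    rw [h1, meas_reach_trans μ init hiid (n+1) (-1)]
    rfl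
  -- the sub-event G with three pinned zeros above a path to (0,n)
  have hG1 : μ {ω | reachable (init ω) n 0 ∧ evol (init ω) (n+1) 0 = 0}
      = 2⁻¹ * Dm μ init n := by
    have h1 := meas_fresh μ init hiid (Finset.Icc (-(n:ℤ)-1) ((n:ℤ)+1)) ((n:ℤ)+1)
      (by rw [Finset.mem_Icc]; omega)
      (fun f => reachable f n 0) (fun f => evol f (n+1) 0 = 0)
      ((depOn_reachable n 0).mono (by
        intro y hy
        rw [Finset.mem_Icc] at hy
        rw [Finset.mem_erase, Finset.mem_Icc]
        push_cast at hy ⊢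
        omega))
      ((depOn_evol (n+1) 0).mono (by
        intro y hy
        rw [Finset.mem_Icc] at hy
        rw [Finset.mem_Icc]
        push_cast at hy ⊢
        omega))
      (toggle_bit (n+1) 0 ((n:ℤ)+1) (Or.inl (by push_cast; ring)))
    rw [h1]
    rfl
  have hG2 : μ {ω | (reachable (init ω) n 0 ∧ evol (init ω) (n+1) 0 = 0)
        ∧ evol (init ω) (n+1) 1 = 0}
      = 2⁻¹ * (2⁻¹ * Dm μ init n) := by
    have h1 := meas_fresh μ init hiid (Finset.Icc (-(n:ℤ)-1) ((n:ℤ)+2)) ((n:ℤ)+2)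
      (by rw [Finset.mem_Icc]; omega)
      (fun f => reachable f n 0 ∧ evol f (n+1) 0 = 0) (fun f => evol f (n+1) 1 = 0)
      (by
        have d1 : DepOn (fun f => reachable f n 0) (Finset.Icc (-(n:ℤ)-1) ((n:ℤ)+1)) :=
          (depOn_reachable n 0).mono (by
            intro y hy; rw [Finset.mem_Icc] at hy; rw [Finset.mem_Icc]
            push_cast at hy ⊢; omega)
        have d2 : DepOn (fun f => evol f (n+1) 0 = 0) (Finset.Icc (-(n:ℤ)-1) ((n:ℤ)+1)) :=
          (depOn_evol (n+1) 0).mono (by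
            intro y hy; rw [Finset.mem_Icc] at hy; rw [Finset.mem_Icc]
            push_cast at hy ⊢; omega)
        exact (d1.and d2).mono (by
          intro y hy; rw [Finset.mem_Icc] at hy
          rw [Finset.mem_erase, Finset.mem_Icc]
          push_cast at hy ⊢; omega))
      ((depOn_evol (n+1) 1).mono (by
        intro y hy
        rw [Finset.mem_Icc] at hy
        rw [Finset.mem_Icc]
        push_cast at hy ⊢
        omega))
      (toggle_bit (n+1) 1 ((n:ℤ)+2) (Or.inl (by push_cast; ring)))
    rw [h1, hG1]
  have hG3 : μ {ω | ((reachable (init ω) n 0 ∧ evol (init ω) (n+1) 0 = 0)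
        ∧ evol (init ω) (n+1) 1 = 0) ∧ evol (init ω) (n+1) (-1) = 0}
      = 8⁻¹ * Dm μ init n := by
    have h1 := meas_fresh μ init hiid (Finset.Icc (-(n:ℤ)-2) ((n:ℤ)+2)) (-(n:ℤ)-2)
      (by rw [Finset.mem_Icc]; omega)
      (fun f => (reachable f n 0 ∧ evol f (n+1) 0 = 0) ∧ evol f (n+1) 1 = 0)
      (fun f => evol f (n+1) (-1) = 0)
      (by
        have d1 : DepOn (fun f => reachable f n 0) (Finset.Icc (-(n:ℤ)-1) ((n:ℤ)+2)) :=
          (depOn_reachable n 0).mono (by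
            intro y hy; rw [Finset.mem_Icc] at hy; rw [Finset.mem_Icc]
            push_cast at hy ⊢; omega)
        have d2 : DepOn (fun f => evol f (n+1) 0 = 0) (Finset.Icc (-(n:ℤ)-1) ((n:ℤ)+2)) :=
          (depOn_evol (n+1) 0).mono (by
            intro y hy; rw [Finset.mem_Icc] at hy; rw [Finset.mem_Icc]
            push_cast at hy ⊢; omega)
        have d3 : DepOn (fun f => evol f (n+1) 1 = 0) (Finset.Icc (-(n:ℤ)-1) ((n:ℤ)+2)) :=
          (depOn_evol (n+1) 1).mono (by
            intro y hy; rw [Finset.mem_Icc] at hy; rw [Finset.mem_Icc]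
            push_cast at hy ⊢; omega)
        exact ((d1.and d2).and d3).mono (by
          intro y hy; rw [Finset.mem_Icc] at hy
          rw [Finset.mem_erase, Finset.mem_Icc]
          push_cast at hy ⊢; omega))
      ((depOn_evol (n+1) (-1)).mono (by
        intro y hy
        rw [Finset.mem_Icc] at hy
        rw [Finset.mem_Icc]
        push_cast at hy ⊢
        omega))
      (toggle_bit (n+1) (-1) (-(n:ℤ)-2) (Or.inr (by push_cast; ring)))
    rw [h1, hG2, inv8]
  -- inclusion of G into the intersection event
  have hsub : {ω | ((reachable (init ω) n 0 ∧ evol (init ω) (n+1) 0 = 0)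
        ∧ evol (init ω) (n+1) 1 = 0) ∧ evol (init ω) (n+1) (-1) = 0}
      ⊆ {ω | (reachable (init ω) (n+1) (-1) ∧ evol (init ω) (n+2) 0 = 0)
        ∧ (reachable (init ω) (n+1) 1 ∧ evol (init ω) (n+2) 0 = 0)} := by
    intro ω hω
    obtain ⟨⟨⟨hreach, h0⟩, h1⟩, hm1⟩ := hω
    have hv : evol (init ω) (n+2) 0 = 0 := by
      have h := evol_succ (init ω) (n+1) 0
      rw [show ((0:ℤ) - 1) = -1 by ring, show ((0:ℤ) + 1) = 1 by ring] at h
      rw [h, h0, h1, hm1]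
      ring
    have hrm : reachable (init ω) (n+1) (-1) := by
      rw [reachable_step]
      refine ⟨hm1, Or.inr ?_⟩
      rw [show (-1:ℤ) + 1 = 0 by ring]
      exact hreach
    have hrp : reachable (init ω) (n+1) 1 := by
      rw [reachable_step]
      refine ⟨h1, Or.inl ?_⟩
      rw [show (1:ℤ) - 1 = 0 by ring]
      exact hreach
    exact ⟨⟨hrm, hv⟩, ⟨hrp, hv⟩⟩
  -- inclusion-exclusion
  have hIE := meas_IE μ init hiid (Finset.Icc (-(n:ℤ)-2) ((n:ℤ)+2))
    (fun f => reachable f (n+1) (-1) ∧ evol f (n+2) 0 = 0)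
    (fun f => reachable f (n+1) 1 ∧ evol f (n+2) 0 = 0)
    (((depOn_reachable (n+1) (-1)).mono (by
        intro y hy
        rw [Finset.mem_Icc] at hy
        rw [Finset.mem_Icc]
        push_cast at hy ⊢
        omega)).and ((depOn_evol (n+2) 0).mono (by
        intro y hy
        rw [Finset.mem_Icc] at hy
        rw [Finset.mem_Icc]
        push_cast at hy ⊢
        omega)))
    (((depOn_reachable (n+1) 1).mono (by
        intro y hy
        rw [Finset.mem_Icc] at hy
        rw [Finset.mem_Icc]
        push_cast at hy ⊢
        omega)).and ((depOn_evol (n+2) 0).mono (by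
        intro y hy
        rw [Finset.mem_Icc] at hy
        rw [Finset.mem_Icc]
        push_cast at hy ⊢
        omega)))
  -- identify the union with reachability at level n+2
  have hset : {ω | reachable (init ω) (n+2) 0}
      = {ω | (reachable (init ω) (n+1) (-1) ∧ evol (init ω) (n+2) 0 = 0)
          ∨ (reachable (init ω) (n+1) 1 ∧ evol (init ω) (n+2) 0 = 0)} := by
    ext ω
    show reachable (init ω) (n+2) 0 ↔ _
    rw [show (n+2) = (n+1)+1 by ring, reachable_step]
    rw [show ((0:ℤ) - 1) = -1 by ring, show ((0:ℤ) + 1) = 1 by ring]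
    constructor
    · rintro ⟨hev, h | h⟩
      · exact Or.inl ⟨h, hev⟩
      · exact Or.inr ⟨h, hev⟩
    · rintro (⟨h, hev⟩ | ⟨h, hev⟩)
      · exact ⟨hev, Or.inl h⟩
      · exact ⟨hev, Or.inr h⟩
  have hmono2 : (8:ENNReal)⁻¹ * Dm μ init n
      ≤ μ {ω | (reachable (init ω) (n+1) (-1) ∧ evol (init ω) (n+2) 0 = 0)
          ∧ (reachable (init ω) (n+1) 1 ∧ evol (init ω) (n+2) 0 = 0)} := by
    rw [← hG3]
    exact measure_mono hsub
  calc Dm μ init (n+2) + 8⁻¹ * Dm μ init n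
      ≤ μ {ω | (reachable (init ω) (n+1) (-1) ∧ evol (init ω) (n+2) 0 = 0)
          ∨ (reachable (init ω) (n+1) 1 ∧ evol (init ω) (n+2) 0 = 0)}
        + μ {ω | (reachable (init ω) (n+1) (-1) ∧ evol (init ω) (n+2) 0 = 0)
          ∧ (reachable (init ω) (n+1) 1 ∧ evol (init ω) (n+2) 0 = 0)} := by
        apply add_le_add
        · rw [Dm, hset]
        · exact hmono2
    _ = 2⁻¹ * Dm μ init (n+1) + 2⁻¹ * Dm μ init (n+1) := by
        rw [hIE, hEm, hEp]
    _ = Dm μ init (n+1) := half_add_half _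

end Rec

section Final

variable {Ω : Type} [MeasurableSpace Ω] (μ : Measure Ω) (init : Ω → Config)
variable [IsProbabilityMeasure μ]

lemma D_one_le (hiid : IIDFairOn μ init Set.univ) : Dm μ init 1 ≤ 2⁻¹ := by
  have h := meas_fresh μ init hiid (Finset.Icc (-1:ℤ) 1) 1 (by rw [Finset.mem_Icc]; omega)
    (fun _ => True) (fun f => evol f 1 0 = 0)
    (fun f g _ => Iff.rfl)
    ((depOn_evol 1 0).mono (by
      intro y hy; rw [Finset.mem_Icc] at hy; rw [Finset.mem_Icc]
      push_cast at hy ⊢; omega))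
    (toggle_bit 1 0 1 (Or.inl (by norm_num)))
  have h2 : μ {ω | True ∧ evol (init ω) 1 0 = 0} = 2⁻¹ := by
    rw [h]
    have e : {ω : Ω | True} = Set.univ := by ext; simp
    rw [e, measure_univ, mul_one]
  rw [← h2, Dm]
  apply measure_mono
  intro ω hω
  obtain ⟨π, hend, hsteps, hz⟩ := hω
  exact ⟨trivial, by rw [← hend]; exact hz 1 le_rfl⟩

lemma D_zero_eq (hiid : IIDFairOn μ init Set.univ) : Dm μ init 0 = 2⁻¹ := by
  have h := meas_fresh μ init hiid (Finset.Icc (0:ℤ) 0) 0 (by rw [Finset.mem_Icc]; omega)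
    (fun _ => True) (fun f => evol f 0 0 = 0)
    (fun f g _ => Iff.rfl)
    ((depOn_evol 0 0).mono (by
      intro y hy; rw [Finset.mem_Icc] at hy; rw [Finset.mem_Icc]
      push_cast at hy ⊢; omega))
    (toggle_bit 0 0 0 (Or.inl (by norm_num)))
  have h2 : μ {ω | True ∧ evol (init ω) 0 0 = 0} = 2⁻¹ := by
    rw [h]
    have e : {ω : Ω | True} = Set.univ := by ext; simp
    rw [e, measure_univ, mul_one]
  rw [← h2, Dm]
  congr 1
  ext ω
  show reachable (init ω) 0 0 ↔ _
  rw [reachable_zero]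
  simp only [true_and]
  exact Iff.rfl

lemma D_mono (hiid : IIDFairOn μ init Set.univ) : ∀ n, Dm μ init (n+1) ≤ Dm μ init n := by
  intro n
  match n with
  | 0 => rw [D_zero_eq μ init hiid]; exact D_one_le μ init hiid
  | Nat.succ m =>
    have h := rec_step μ init hiid m
    exact le_trans (le_add_right le_rfl) h

lemma D_rate (hiid : IIDFairOn μ init Set.univ) (n : ℕ) :
    Dm μ init (n+2) ≤ (7 * (8:ENNReal)⁻¹) * Dm μ init (n+1) := by
  have h1 := rec_step μ init hiid n
  have h2 := D_mono μ init hiid n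
  have h3 : Dm μ init (n+2) + 8⁻¹ * Dm μ init (n+1) ≤ Dm μ init (n+1) :=
    le_trans (add_le_add_right (mul_le_mul_right h2 _) _) h1
  have hkey : (7:ENNReal) * 8⁻¹ + 8⁻¹ = 1 := by
    rw [show ((8:ENNReal)⁻¹) = 1 * 8⁻¹ by rw [one_mul], ← mul_assoc]
    rw [mul_one, ← add_mul]
    rw [show (7:ENNReal) + 1 = 8 by norm_num]
    exact ENNReal.mul_inv_cancel (by norm_num) (by norm_num)
  have h4 : Dm μ init (n+1) = 7 * 8⁻¹ * Dm μ init (n+1) + 8⁻¹ * Dm μ init (n+1) := by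
    rw [← add_mul, hkey, one_mul]
  have hne : (8:ENNReal)⁻¹ * Dm μ init (n+1) ≠ ⊤ :=
    ENNReal.mul_ne_top (by norm_num) (measure_ne_top μ _)
  nth_rewrite 2 [h4] at h3
  exact (ENNReal.add_le_add_iff_right hne).1 h3

lemma D_bound (hiid : IIDFairOn μ init Set.univ) :
    ∀ s : ℕ, Dm μ init (s+1) ≤ 2⁻¹ * (7 * (8:ENNReal)⁻¹)^s := by
  intro s
  induction s with
  | zero => rw [pow_zero, mul_one]; exact D_one_le μ init hiid
  | succ m ih =>
    have h1 := D_rate μ init hiid m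
    have h2 : (7 * (8:ENNReal)⁻¹) * Dm μ init (m+1)
        ≤ (7 * (8:ENNReal)⁻¹) * (2⁻¹ * (7 * (8:ENNReal)⁻¹)^m) := mul_le_mul_right ih _
    refine le_trans h1 (le_trans h2 (le_of_eq ?_))
    rw [pow_succ]
    ring

end Final

end Sub

theorem subcritical_diagonal_paths :
    ∃ c : ℝ, 0 < c ∧
      ∀ {Ω : Type} [MeasurableSpace Ω] (μ : Measure Ω), IsProbabilityMeasure μ →
      ∀ init : Ω → Config, IIDFairOn μ init Set.univ →
      ∀ t : ℕ, 0 < t →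
        μ {ω | ∃ π : ℕ → ℤ, π t = 0 ∧ (∀ i < t, |π (i + 1) - π i| = 1) ∧
            ∀ i ≤ t, evol (init ω) i (π i) = 0}
          < ENNReal.ofReal (Real.exp (-c * t)) := by
  refine ⟨Real.log (8/7), Real.log_pos (by norm_num), ?_⟩
  intro Ω _ μ hprob init hiid t ht
  haveI := hprob
  obtain ⟨s, rfl⟩ : ∃ s, t = s + 1 := ⟨t - 1, by omega⟩
  have hb := Sub.D_bound μ init hiid s
  have hr : (7 * (8:ENNReal)⁻¹) = ENNReal.ofReal (7/8 : ℝ) := by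
    rw [ENNReal.ofReal_div_of_pos (by norm_num), ENNReal.ofReal_ofNat,
        ENNReal.ofReal_ofNat, div_eq_mul_inv]
  have hhalf : (2:ENNReal)⁻¹ = ENNReal.ofReal (1/2 : ℝ) := by
    rw [ENNReal.ofReal_div_of_pos (by norm_num), ENNReal.ofReal_one,
        ENNReal.ofReal_ofNat, one_div]
  have hexp : Real.exp (-(Real.log (8/7)) * ((s+1 : ℕ):ℝ)) = (7/8:ℝ)^(s+1) := by
    rw [mul_comm, Real.exp_nat_mul, Real.exp_neg, Real.exp_log (by norm_num : (0:ℝ) < 8/7)]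
    norm_num
  have hfinal : Sub.Dm μ init (s+1) < ENNReal.ofReal (Real.exp (-(Real.log (8/7)) * ((s+1 : ℕ):ℝ))) := by
    calc Sub.Dm μ init (s+1) ≤ 2⁻¹ * (7 * (8:ENNReal)⁻¹)^s := hb
      _ = ENNReal.ofReal ((1/2 : ℝ) * (7/8:ℝ)^s) := by
          rw [ENNReal.ofReal_mul (by norm_num), ENNReal.ofReal_pow (by norm_num), ← hr, ← hhalf]
      _ < ENNReal.ofReal ((7/8:ℝ)^(s+1)) := by
          rw [ENNReal.ofReal_lt_ofReal_iff (by positivity)]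
          have hp := pow_pos (show (0:ℝ) < 7/8 by norm_num) s
          rw [pow_succ]
          nlinarith
      _ = ENNReal.ofReal (Real.exp (-(Real.log (8/7)) * ((s+1 : ℕ):ℝ))) := by rw [hexp]
  exact hfinal
end

section
/- Random edge-intervals: let λ_0 be i.i.d. fair bits on [0, L] and 0 outside, evolving under the '1 Or 3' rule. Then for each fixed time t ≥ 0, the random variables λ_t(t), λ_t(t+1), …, λ_t(t+L) are independent fair bits. -/
open MeasureTheory

lemma evol_succ (f : Config) (t : ℕ) : evol f (t+1) = evol (step f) t :=
  Function.iterate_succ_apply step t f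

/-- Key "edge coefficient" lemma: if `f` and `g` agree strictly to the right of `n`,
then `evol f t (t+n)` and `evol g t (t+n)` differ exactly by `f n - g n`. -/
lemma edge : ∀ (t : ℕ) (n : ℤ) (f g : Config), (∀ x, n < x → f x = g x) →
    evol f t ((t : ℤ) + n) + g n = evol g t ((t : ℤ) + n) + f n := by
  intro t
  induction t with
  | zero =>
    intro n f g h
    simp only [evol, Function.iterate_zero, id_eq, Nat.cast_zero, zero_add]
    ring
  | succ t ih =>
    intro n f g h
    have hstep : ∀ x, (n+1) < x → step f x = step g x := by
      intro x hx
      simp only [step]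
      rw [h _ (by omega), h _ (by omega), h _ (by omega)]
    have key := ih (n+1) (step f) (step g) hstep
    have harg : ((t+1 : ℕ) : ℤ) + n = (t : ℤ) + (n+1) := by push_cast; ring
    rw [evol_succ, evol_succ, harg]
    have hf1 : step f (n+1) = f n + f (n+1) + f (n+2) := by
      simp only [step, show n+1-1 = n from by ring, show n+1+1 = n+2 from by ring]
    have hg1 : step g (n+1) = g n + g (n+1) + g (n+2) := by
      simp only [step, show n+1-1 = n from by ring, show n+1+1 = n+2 from by ring]
    rw [hf1, hg1, h (n+1) (by omega), h (n+2) (by omega)] at key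
    linear_combination key

/-- Extension of a word on `[0,L]` to a configuration vanishing elsewhere. -/
def myext (L : ℕ) (w : Fin (L+1) → ZMod 2) : Config :=
  fun x => if hx : 0 ≤ x ∧ x ≤ L then w ⟨x.toNat, by omega⟩ else 0

lemma myext_coe (L : ℕ) (w : Fin (L+1) → ZMod 2) (i : Fin (L+1)) :
    myext L w ((i : ℕ) : ℤ) = w i := by
  have hi : ((i:ℕ):ℤ) ≤ L := by exact_mod_cast Int.ofNat_le.mpr (Nat.le_of_lt_succ i.2)
  simp only [myext, Int.toNat_natCast]
  rw [dif_pos ⟨Int.natCast_nonneg _, hi⟩]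

/-- The map reading off the evolution on the travelling edge window is injective. -/
lemma T_inj (L t : ℕ) :
    Function.Injective (fun w : Fin (L+1) → ZMod 2 =>
      fun i : Fin (L+1) => evol (myext L w) t ((t : ℤ) + (i : ℕ))) := by
  intro w w' h
  simp only [funext_iff] at h
  have key : ∀ m, ∀ i : Fin (L+1), L - (i : ℕ) = m → w i = w' i := by
    intro m
    induction m using Nat.strong_induction_on with
    | _ m ih =>
      intro i hi
      have hgt : ∀ x : ℤ, ((i:ℕ):ℤ) < x → myext L w x = myext L w' x := by
        intro x hx
        by_cases hr : 0 ≤ x ∧ x ≤ L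
        · have hjx : x.toNat < L + 1 := by omega
          have hji : (i : ℕ) < x.toNat := by omega
          have := ih (L - x.toNat) (by omega) ⟨x.toNat, hjx⟩ rfl
          simp only [myext, dif_pos hr]
          exact this
        · simp only [myext, dif_neg hr]
      have := edge t ((i:ℕ):ℤ) (myext L w) (myext L w') hgt
      rw [h i, myext_coe, myext_coe] at this
      exact (add_left_cancel this).symm
  funext i
  exact key (L - (i:ℕ)) i rfl

lemma card_agree (L : ℕ) (S : Finset (Fin (L+1))) (v : Fin (L+1) → ZMod 2) :
    (Finset.univ.filter (fun w : Fin (L+1) → ZMod 2 => ∀ i ∈ S, w i = v i)).card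
      = 2 ^ (L + 1 - S.card) := by
  have e : {w : Fin (L+1) → ZMod 2 // ∀ i ∈ S, w i = v i} ≃ ({i : Fin (L+1) // i ∉ S} → ZMod 2) :=
    { toFun := fun w j => w.1 j.1
      invFun := fun g => ⟨fun i => if h : i ∈ S then v i else g ⟨i, h⟩,
        fun i hi => by simp [hi]⟩
      left_inv := by
        intro w
        ext i
        by_cases h : i ∈ S
        · simp [h, w.2 i h]
        · simp [h]
      right_inv := by
        intro g
        funext j
        simp [j.2] }
  have h1 : (Finset.univ.filter (fun w : Fin (L+1) → ZMod 2 => ∀ i ∈ S, w i = v i)).card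
      = Fintype.card {w : Fin (L+1) → ZMod 2 // ∀ i ∈ S, w i = v i} :=
    (Fintype.card_subtype _).symm
  rw [h1, Fintype.card_congr e, Fintype.card_fun]
  congr 1
  rw [Fintype.card_subtype_compl, Fintype.card_fin, Fintype.card_coe]

lemma count_mul (a s : ℕ) :
    (2:ENNReal)^a * ((2:ENNReal)⁻¹)^(a + s) = ((2:ENNReal)⁻¹)^s := by
  rw [pow_add, ← mul_assoc, ← mul_pow, ENNReal.mul_inv_cancel two_ne_zero ENNReal.ofNat_ne_top,
    one_pow, one_mul]

theorem random_edge_intervals {Ω : Type*} [MeasurableSpace Ω]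
    (μ : Measure Ω) [IsProbabilityMeasure μ] (L : ℕ) (init : Ω → Config)
    (hrand : IIDFairOn μ init (Set.Icc (0 : ℤ) L))
    (hzero : ∀ x ∉ Set.Icc (0 : ℤ) (L : ℤ), ∀ ω, init ω x = 0)
    (t : ℕ) :
    ∀ (S : Finset (Fin (L + 1))) (v : Fin (L + 1) → ZMod 2),
      μ {ω | ∀ i ∈ S, evol (init ω) t ((t : ℤ) + (i : ℕ)) = v i}
        = (2 : ENNReal)⁻¹ ^ S.card := by
  intro S v
  classical
  set p : ENNReal := (2 : ENNReal)⁻¹ with hp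
  set X : Ω → (Fin (L+1) → ZMod 2) := fun ω i => init ω ((i : ℕ) : ℤ) with hX
  set T : (Fin (L+1) → ZMod 2) → Fin (L+1) → ZMod 2 :=
    fun w i => evol (myext L w) t ((t : ℤ) + (i : ℕ)) with hT
  have hTinj : Function.Injective T := T_inj L t
  -- every initial configuration is the extension of its restriction
  have hext : ∀ ω, init ω = myext L (X ω) := by
    intro ω
    funext x
    by_cases hr : 0 ≤ x ∧ x ≤ (L:ℤ)
    · have hxeq : x = (((⟨x.toNat, by omega⟩ : Fin (L+1)) : ℕ) : ℤ) := by
        simp only [Fin.val_mk]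
        omega
      rw [hxeq, myext_coe]
    · rw [hzero x (by simpa [Set.mem_Icc] using hr) ω]
      unfold myext
      rw [dif_neg hr]
  have hEvol : ∀ ω (i : Fin (L+1)), evol (init ω) t ((t:ℤ) + (i:ℕ)) = T (X ω) i := by
    intro ω i
    rw [hT, hext ω]
  -- atoms have the product measure
  have hA : ∀ w : Fin (L+1) → ZMod 2, μ {ω | X ω = w} = p ^ (L+1) := by
    intro w
    have hs : ↑(Finset.Icc (0:ℤ) (L:ℤ)) ⊆ Set.Icc (0:ℤ) (L:ℤ) := by
      intro x hx
      simpa using hx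
    have hmeas := hrand (Finset.Icc (0:ℤ) (L:ℤ)) hs (myext L w)
    have hset : {ω | ∀ x ∈ Finset.Icc (0:ℤ) (L:ℤ), init ω x = myext L w x}
        = {ω | X ω = w} := by
      ext ω
      simp only [Set.mem_setOf_eq]
      constructor
      · intro hc
        funext i
        have hi : ((i:ℕ):ℤ) ∈ Finset.Icc (0:ℤ) (L:ℤ) := by
          simp only [Finset.mem_Icc]
          constructor
          · positivity
          · exact_mod_cast Nat.le_of_lt_succ i.2
        have := hc _ hi
        rw [myext_coe] at this
        exact this
      · intro hc x hx
        simp only [Finset.mem_Icc] at hx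
        have hxeq : x = (((⟨x.toNat, by omega⟩ : Fin (L+1)) : ℕ) : ℤ) := by
          simp only [Fin.val_mk]
          omega
        rw [hxeq, myext_coe]
        exact congrFun hc _
    have hcard : (Finset.Icc (0:ℤ) (L:ℤ)).card = L + 1 := by
      rw [Int.card_Icc]
      omega
    rw [hset, hcard] at hmeas
    exact hmeas
  set G : Finset (Fin (L+1) → ZMod 2) :=
    Finset.univ.filter (fun w => ∀ i ∈ S, T w i = v i) with hG
  set Gc : Finset (Fin (L+1) → ZMod 2) := Finset.univ \ G with hGc
  set E : Set Ω := {ω | ∀ i ∈ S, evol (init ω) t ((t:ℤ) + (i:ℕ)) = v i} with hE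
  -- cardinalities
  have hGcard : G.card = 2 ^ (L + 1 - S.card) := by
    rw [← card_agree L S v]
    apply Finset.card_bij (fun w _ => T w)
    · intro w hw
      simp only [hG, Finset.mem_filter, Finset.mem_univ, true_and] at hw ⊢
      exact hw
    · intro w₁ _ w₂ _ h
      exact hTinj h
    · intro u hu
      simp only [Finset.mem_filter, Finset.mem_univ, true_and] at hu
      obtain ⟨w, hw⟩ := (Finite.injective_iff_bijective.mp hTinj).surjective u
      refine ⟨w, ?_, hw⟩
      simp only [hG, Finset.mem_filter, Finset.mem_univ, true_and]
      intro i hi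
      rw [hw]
      exact hu i hi
  have htot : (Finset.univ : Finset (Fin (L+1) → ZMod 2)).card = 2 ^ (L+1) := by
    simp [Fintype.card_fun, ZMod.card]
  have hGccard : Gc.card = 2 ^ (L+1) - 2 ^ (L + 1 - S.card) := by
    rw [hGc, Finset.card_sdiff_of_subset (Finset.subset_univ G), htot, hGcard]
  -- covering inclusions
  have hEsub : E ⊆ ⋃ w ∈ G, {ω | X ω = w} := by
    intro ω hω
    have hmem : X ω ∈ G := by
      simp only [hG, Finset.mem_filter, Finset.mem_univ, true_and]
      intro i hi
      rw [← hEvol ω i]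
      exact hω i hi
    exact Set.mem_biUnion hmem rfl
  have hCsub : Eᶜ ⊆ ⋃ w ∈ Gc, {ω | X ω = w} := by
    intro ω hω
    have hmem : X ω ∈ Gc := by
      simp only [hGc, Finset.mem_sdiff, Finset.mem_univ, true_and, hG,
        Finset.mem_filter, not_and, not_forall]
      have hnot : ¬ ∀ i ∈ S, evol (init ω) t ((t:ℤ) + (i:ℕ)) = v i := hω
      push_neg at hnot
      obtain ⟨i, hi, hne⟩ := hnot
      exact ⟨i, hi, by rw [← hEvol ω i]; exact hne⟩
    exact Set.mem_biUnion hmem rfl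
  -- upper bounds
  have hup : μ E ≤ (G.card : ENNReal) * p ^ (L+1) := by
    calc μ E ≤ μ (⋃ w ∈ G, {ω | X ω = w}) := measure_mono hEsub
      _ ≤ ∑ w ∈ G, μ {ω | X ω = w} := measure_biUnion_finset_le G _
      _ = (G.card : ENNReal) * p ^ (L+1) := by
          rw [Finset.sum_congr rfl (fun w _ => hA w), Finset.sum_const, nsmul_eq_mul]
  have hupC : μ Eᶜ ≤ (Gc.card : ENNReal) * p ^ (L+1) := by
    calc μ Eᶜ ≤ μ (⋃ w ∈ Gc, {ω | X ω = w}) := measure_mono hCsub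
      _ ≤ ∑ w ∈ Gc, μ {ω | X ω = w} := measure_biUnion_finset_le Gc _
      _ = (Gc.card : ENNReal) * p ^ (L+1) := by
          rw [Finset.sum_congr rfl (fun w _ => hA w), Finset.sum_const, nsmul_eq_mul]
  -- the two constants sum to 1
  have hs' : S.card ≤ L + 1 := by
    have := Finset.card_le_univ S
    simpa [Fintype.card_fin] using this
  have hNle : 2 ^ (L + 1 - S.card) ≤ 2 ^ (L+1) := Nat.pow_le_pow_right (by norm_num) (by omega)
  have hsum : (G.card : ENNReal) * p ^ (L+1) + (Gc.card : ENNReal) * p ^ (L+1) = 1 := by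
    rw [hGcard, hGccard, ← add_mul]
    have : ((2 ^ (L + 1 - S.card) : ℕ) : ENNReal) + ((2 ^ (L+1) - 2 ^ (L + 1 - S.card) : ℕ) : ENNReal)
        = ((2 : ENNReal)) ^ (L+1) := by
      rw [← Nat.cast_add]
      rw [show 2 ^ (L + 1 - S.card) + (2 ^ (L+1) - 2 ^ (L + 1 - S.card)) = 2 ^ (L+1) from by omega]
      push_cast
      ring
    rw [this, hp, ← mul_pow, ENNReal.mul_inv_cancel two_ne_zero ENNReal.ofNat_ne_top, one_pow]
  -- target value
  have hval : (G.card : ENNReal) * p ^ (L+1) = p ^ S.card := by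
    rw [hGcard]
    have hcast : ((2 ^ (L + 1 - S.card) : ℕ) : ENNReal) = (2:ENNReal) ^ (L + 1 - S.card) := by
      push_cast; ring
    rw [hcast, hp]
    have hcm := count_mul (L + 1 - S.card) S.card
    rw [show (L + 1 - S.card) + S.card = L + 1 from by omega] at hcm
    exact hcm
  -- lower bound via complement
  have hc'top : (Gc.card : ENNReal) * p ^ (L+1) ≠ ⊤ :=
    ENNReal.mul_ne_top (ENNReal.natCast_ne_top _)
      (ENNReal.pow_ne_top (by simp [hp]))
  have h1 : (1:ENNReal) ≤ μ E + μ Eᶜ := by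
    calc (1:ENNReal) = μ Set.univ := measure_univ.symm
      _ = μ (E ∪ Eᶜ) := by rw [Set.union_compl_self]
      _ ≤ μ E + μ Eᶜ := measure_union_le _ _
  have h1' : (1:ENNReal) ≤ μ E + (Gc.card : ENNReal) * p ^ (L+1) :=
    h1.trans (add_le_add le_rfl hupC)
  have hlo : (G.card : ENNReal) * p ^ (L+1) ≤ μ E := by
    have heq : (G.card : ENNReal) * p ^ (L+1) = 1 - (Gc.card : ENNReal) * p ^ (L+1) :=
      ENNReal.eq_sub_of_add_eq hc'top hsum
    rw [heq]
    exact tsub_le_iff_right.mpr h1'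
  rw [← hval]
  exact le_antisymm hup hlo
end

section
/- Predecessors of random seeds: let g be the one-step map of the '1 Or 3' cellular automaton on {0,1}^ℤ restricted to finitely supported configurations, and let λ_0 be i.i.d. fair bits on [0, L] and 0 outside. For 1 ≤ k ≤ L/2, the probability that λ_0 lies in the image of the k-fold iterate g^k applied to finitely supported configurations equals 4^{−k}. Moreover, conditioned on this event, the unique k-th preimage of λ_0 under g^k among finitely supported configurations is a uniformly random binary seed on [k, L−k] (i.i.d. fair bits on [k, L−k] and 0 outside). -/
open MeasureTheory

/-- `g` has a `k`-th predecessor among finitely supported configurations. -/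
def HasPred (k : ℕ) (g : Config) : Prop :=
  ∃ f : Config, {x : ℤ | f x ≠ 0}.Finite ∧ step^[k] f = g

open Polynomial

noncomputable section CAaux

/-- coefficient of a polynomial at an integer index (0 for negative). -/
def coeffZ (p : Polynomial (ZMod 2)) (n : ℤ) : ZMod 2 :=
  if 0 ≤ n then p.coeff n.toNat else 0

/-- configuration given by coefficients of `p` shifted to start at `m`. -/
def cfg (p : Polynomial (ZMod 2)) (m : ℤ) : Config := fun x => coeffZ p (x - m)

/-- polynomial with coefficients `g 0, …, g M`. -/
def polyOf (g : Config) (M : ℕ) : Polynomial (ZMod 2) :=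
  ∑ n ∈ Finset.range (M + 1), Polynomial.C (g n) * Polynomial.X ^ n

def rp : Polynomial (ZMod 2) := Polynomial.X ^ 2 + Polynomial.X + 1

lemma coeff_polyOf (g : Config) (M : ℕ) (n : ℕ) :
    (polyOf g M).coeff n = if n ≤ M then g n else 0 := by
  rw [polyOf]
  simp only [C_mul_X_pow_eq_monomial]
  rw [finset_sum_coeff]
  simp only [coeff_monomial]
  rw [Finset.sum_ite_eq']
  simp [Finset.mem_range, Nat.lt_succ_iff]

lemma natDegree_polyOf (g : Config) (M : ℕ) : (polyOf g M).natDegree ≤ M := by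
  apply Polynomial.natDegree_le_iff_coeff_eq_zero.2
  intro n hn
  rw [coeff_polyOf, if_neg (by omega)]

lemma polyOf_congr {g g' : Config} (M : ℕ) (h : ∀ n : ℕ, n ≤ M → g n = g' n) :
    polyOf g M = polyOf g' M := by
  unfold polyOf
  apply Finset.sum_congr rfl
  intro n hn
  rw [h n (by simpa [Nat.lt_succ_iff] using hn)]

lemma cfg_polyOf {g : Config} {M : ℕ} (hg : ∀ x : ℤ, x ∉ Set.Icc (0:ℤ) (M:ℤ) → g x = 0) :
    cfg (polyOf g M) 0 = g := by
  funext x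
  simp only [cfg, coeffZ, sub_zero]
  by_cases h0 : 0 ≤ x
  · rw [if_pos h0, coeff_polyOf]
    by_cases hM : x.toNat ≤ M
    · rw [if_pos hM, Int.toNat_of_nonneg h0]
    · rw [if_neg hM, hg x (by simp [Set.mem_Icc]; omega)]
  · rw [if_neg h0, hg x (by simp [Set.mem_Icc]; omega)]

lemma polyOf_cfg {p : Polynomial (ZMod 2)} {M : ℕ} (hp : p.natDegree ≤ M) :
    polyOf (cfg p 0) M = p := by
  apply Polynomial.ext
  intro n
  rw [coeff_polyOf]
  by_cases hn : n ≤ M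
  · rw [if_pos hn]
    simp [cfg, coeffZ]
  · rw [if_neg hn]
    exact (Polynomial.coeff_eq_zero_of_natDegree_lt (by omega)).symm

lemma coeffZ_coe (p : Polynomial (ZMod 2)) (j : ℕ) : coeffZ p (j : ℤ) = p.coeff j := by
  simp [coeffZ]

lemma coeffZ_neg {p : Polynomial (ZMod 2)} {n : ℤ} (h : n < 0) : coeffZ p n = 0 := by
  simp [coeffZ, not_le.2 h]

lemma coeffZ_mul_rp (p : Polynomial (ZMod 2)) (n : ℤ) :
    coeffZ (rp * p) n = coeffZ p (n - 2) + coeffZ p (n - 1) + coeffZ p n := by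
  have hrw : rp * p = p * X ^ 2 + p * X ^ 1 + p := by rw [rp]; ring
  by_cases h0 : 0 ≤ n
  · obtain ⟨j, rfl⟩ := Int.eq_ofNat_of_zero_le h0
    rw [hrw]
    match j with
    | 0 => norm_num [coeffZ, coeff_mul_X_pow']
    | 1 => norm_num [coeffZ, coeff_mul_X_pow']
    | (j+2) =>
        rw [show ((j+2:ℕ):ℤ) - 2 = ((j:ℕ):ℤ) by push_cast; ring,
          show ((j+2:ℕ):ℤ) - 1 = ((j+1:ℕ):ℤ) by push_cast; ring,
          coeffZ_coe (p * X ^ 2 + p * X ^ 1 + p) (j+2), coeffZ_coe p j,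
          coeffZ_coe p (j+1), coeffZ_coe p (j+2),
          Polynomial.coeff_add, Polynomial.coeff_add, coeff_mul_X_pow', coeff_mul_X_pow',
          if_pos (by omega : 2 ≤ j + 2), if_pos (by omega : 1 ≤ j + 2),
          show j + 2 - 2 = j by omega, show j + 2 - 1 = j + 1 by omega]
  · rw [coeffZ_neg (by omega), coeffZ_neg (by omega), coeffZ_neg (by omega),
      coeffZ_neg (by omega)]
    simp

lemma step_cfg (p : Polynomial (ZMod 2)) (m : ℤ) :
    step (cfg p m) = cfg (rp * p) (m - 1) := by
  funext x
  simp only [step, cfg, coeffZ_mul_rp]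
  have e1 : x - (m - 1) - 2 = x - 1 - m := by ring
  have e2 : x - (m - 1) - 1 = x - m := by ring
  have e3 : x - (m - 1) = x + 1 - m := by ring
  rw [e1, e2, e3]

lemma iterate_step_cfg (p : Polynomial (ZMod 2)) (m : ℤ) (t : ℕ) :
    step^[t] (cfg p m) = cfg (rp ^ t * p) (m - t) := by
  induction t generalizing p m with
  | zero => simp [cfg]
  | succ t ih =>
    rw [Function.iterate_succ_apply, step_cfg, ih]
    have h1 : rp ^ t * (rp * p) = rp ^ (t+1) * p := by ring
    have h2 : m - 1 - (t:ℤ) = m - ((t+1 : ℕ) : ℤ) := by push_cast; ring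
    rw [h1, h2]

lemma cfg_support_finite (p : Polynomial (ZMod 2)) (m : ℤ) :
    {x : ℤ | cfg p m x ≠ 0}.Finite := by
  apply Set.Finite.subset (Set.finite_Icc m (m + p.natDegree))
  intro x hx
  simp only [Set.mem_setOf_eq, cfg, coeffZ] at hx
  by_cases h0 : 0 ≤ x - m
  · rw [if_pos h0] at hx
    have := Polynomial.le_natDegree_of_ne_zero hx
    simp [Set.mem_Icc]
    omega
  · rw [if_neg h0] at hx; exact absurd rfl hx

lemma cfg_eq_zero_of_gt {p : Polynomial (ZMod 2)} {m x : ℤ} (h : m + p.natDegree < x) :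
    cfg p m x = 0 := by
  simp only [cfg, coeffZ]
  by_cases h0 : 0 ≤ x - m
  · rw [if_pos h0]
    exact Polynomial.coeff_eq_zero_of_natDegree_lt (by omega)
  · rw [if_neg h0]

lemma monic_rp : rp.Monic := by
  have : rp = X ^ 2 + (X + 1) := by rw [rp]; ring
  rw [this]
  apply Polynomial.monic_X_pow_add
  apply lt_of_le_of_lt (Polynomial.degree_add_le _ _)
  simp [Polynomial.degree_X, Polynomial.degree_one]

lemma natDegree_rp : rp.natDegree = 2 := by
  have hd : rp.degree = 2 := by
    have h1 : rp = X ^ 2 + (X + 1) := by rw [rp]; ring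
    have hlt : (X + 1 : Polynomial (ZMod 2)).degree < (X ^ 2 : Polynomial (ZMod 2)).degree := by
      rw [Polynomial.degree_X_pow]
      apply lt_of_le_of_lt (Polynomial.degree_add_le _ _)
      simp [Polynomial.degree_X, Polynomial.degree_one]
    rw [h1, Polynomial.degree_add_eq_left_of_degree_lt hlt, Polynomial.degree_X_pow]
    rfl
  exact Polynomial.natDegree_eq_of_degree_eq_some hd

lemma coprime_X_rp : IsCoprime (X : Polynomial (ZMod 2)) rp := by
  rw [(Polynomial.irreducible_X).coprime_iff_not_dvd, Polynomial.X_dvd_iff]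
  rw [rp]
  simp

lemma exists_cfg {f : Config} (hf : {x : ℤ | f x ≠ 0}.Finite) :
    ∃ p : Polynomial (ZMod 2), ∃ m : ℤ, f = cfg p m := by
  by_cases hne : hf.toFinset.Nonempty
  · set m := hf.toFinset.min' hne with hm
    have hmem : ∀ y ∈ hf.toFinset, m ≤ y := fun y hy => hf.toFinset.min'_le y hy
    refine ⟨∑ x ∈ hf.toFinset, Polynomial.C (f x) * Polynomial.X ^ ((x - m).toNat), m, ?_⟩
    have hcoeff : ∀ j : ℕ,
        (∑ x ∈ hf.toFinset, Polynomial.C (f x) * Polynomial.X ^ ((x - m).toNat)).coeff j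
          = f (m + j) := by
      intro j
      rw [Polynomial.finset_sum_coeff]
      simp only [C_mul_X_pow_eq_monomial, Polynomial.coeff_monomial]
      by_cases hj : m + j ∈ hf.toFinset
      · rw [Finset.sum_eq_single (m + (j:ℤ))]
        · rw [if_pos (by omega)]
        · intro y hy hyne
          rw [if_neg]
          intro hEq
          have hy' := hmem y hy
          omega
        · intro h; exact absurd hj h
      · have hz : f (m + (j:ℤ)) = 0 := by
          by_contra h
          exact hj (hf.mem_toFinset.2 h)
        rw [hz]
        apply Finset.sum_eq_zero
        intro y hy
        rw [if_neg]
        intro hEq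
        have hy' := hmem y hy
        have hyy : y = m + j := by omega
        rw [hyy] at hy
        exact hj hy
    funext x
    by_cases hx : m ≤ x
    · rw [cfg, coeffZ, if_pos (by omega), hcoeff]
      congr 1
      omega
    · rw [cfg, coeffZ, if_neg (by omega)]
      by_contra hfx
      have : x ∈ hf.toFinset := hf.mem_toFinset.2 hfx
      have := hmem x this
      omega
  · refine ⟨0, 0, ?_⟩
    funext x
    have : x ∉ hf.toFinset := fun h => hne ⟨x, h⟩
    simp [Set.Finite.mem_toFinset] at this
    simp [cfg, coeffZ, this]

lemma cfg_inj {p₁ p₂ : Polynomial (ZMod 2)} {m₁ m₂ : ℤ} (hle : m₁ ≤ m₂)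
    (h : cfg p₁ m₁ = cfg p₂ m₂) : p₁ = X ^ ((m₂ - m₁).toNat) * p₂ := by
  apply Polynomial.ext
  intro j
  have h1 : p₁.coeff j = cfg p₁ m₁ (m₁ + j) := by
    rw [cfg, coeffZ, if_pos (by omega)]
    congr 1
    omega
  rw [h1, h, cfg, coeffZ]
  rw [mul_comm, coeff_mul_X_pow']
  by_cases hj : (m₂ - m₁).toNat ≤ j
  · rw [if_pos hj, if_pos (by omega)]
    congr 1
    omega
  · rw [if_neg hj, if_neg (by omega)]

lemma hasPred_iff {L k : ℕ} {g : Config} (hg : ∀ x : ℤ, x ∉ Set.Icc (0:ℤ) (L:ℤ) → g x = 0) :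
    HasPred k g ↔ rp ^ k ∣ polyOf g L := by
  have hgc : cfg (polyOf g L) 0 = g := cfg_polyOf hg
  constructor
  · rintro ⟨f, hfin, hstep⟩
    obtain ⟨p, m, rfl⟩ := exists_cfg hfin
    rw [iterate_step_cfg] at hstep
    rw [← hgc] at hstep
    by_cases hmk : m - k ≤ 0
    · have := cfg_inj hmk hstep
      have hco : IsCoprime (rp ^ k) ((X : Polynomial (ZMod 2)) ^ ((0 - (m - k)).toNat)) :=
        (coprime_X_rp.symm).pow
      apply hco.dvd_of_dvd_mul_left
      rw [← this]
      exact Dvd.intro p rfl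
    · have := cfg_inj (by omega : (0:ℤ) ≤ m - k) hstep.symm
      rw [this]
      exact Dvd.dvd.mul_left (Dvd.intro p rfl) _
  · intro hdvd
    refine ⟨cfg (polyOf g L /ₘ rp ^ k) k, cfg_support_finite _ _, ?_⟩
    rw [iterate_step_cfg]
    have hq : (rp ^ k).Monic := monic_rp.pow k
    have : rp ^ k * (polyOf g L /ₘ rp ^ k) = polyOf g L := by
      conv_rhs => rw [← Polynomial.modByMonic_add_div (polyOf g L) (rp ^ k)]
      rw [(Polynomial.modByMonic_eq_zero_iff_dvd hq).2 hdvd, zero_add]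
    rw [this, sub_self, hgc]

section Meas
variable {Ω : Type*} [MeasurableSpace Ω] {W : Type*} [Fintype W] [DecidableEq W]

lemma measure_preimage_finset (μ : Measure Ω) [IsProbabilityMeasure μ] (π : Ω → W)
    (c : ENNReal) (hc : c ≠ ⊤) (htot : (Fintype.card W : ENNReal) * c = 1)
    (hcyl : ∀ w, μ (π ⁻¹' {w}) = c) (T : Finset W) :
    μ (π ⁻¹' ↑T) = T.card * c := by
  have hub : ∀ T : Finset W, μ (π ⁻¹' ↑T) ≤ T.card * c := by
    intro T
    have hU : π ⁻¹' ↑T = ⋃ w ∈ T, π ⁻¹' {w} := by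
      ext ω; simp
    rw [hU]
    refine le_trans (measure_biUnion_finset_le T _) ?_
    rw [Finset.sum_congr rfl (fun w _ => hcyl w), Finset.sum_const, nsmul_eq_mul]
  refine le_antisymm (hub T) ?_
  have hcover : (Set.univ : Set Ω) ⊆ π ⁻¹' ↑T ∪ π ⁻¹' ↑(Tᶜ) := by
    intro ω _
    by_cases h : π ω ∈ T
    · left; exact h
    · right; simpa using h
  have hsum : (T.card : ENNReal) * c + (Tᶜ.card : ENNReal) * c = 1 := by
    rw [← add_mul, ← Nat.cast_add, Finset.card_add_card_compl, htot]
  have h1 : (1 : ENNReal) ≤ μ (π ⁻¹' ↑T) + (Tᶜ.card : ENNReal) * c := by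
    calc (1 : ENNReal) = μ Set.univ := (measure_univ).symm
    _ ≤ μ (π ⁻¹' ↑T ∪ π ⁻¹' ↑(Tᶜ)) := measure_mono hcover
    _ ≤ μ (π ⁻¹' ↑T) + μ (π ⁻¹' ↑(Tᶜ)) := measure_union_le _ _
    _ ≤ μ (π ⁻¹' ↑T) + (Tᶜ.card : ENNReal) * c := by
        exact add_le_add le_rfl (hub Tᶜ)
  rw [← hsum] at h1
  exact (ENNReal.add_le_add_iff_right (ENNReal.mul_ne_top (ENNReal.natCast_ne_top _) hc)).1 h1

lemma restrict_preimage_finset (μ : Measure Ω) [IsProbabilityMeasure μ] (π : Ω → W)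
    (c : ENNReal) (hc : c ≠ ⊤) (htot : (Fintype.card W : ENNReal) * c = 1)
    (hcyl : ∀ w, μ (π ⁻¹' {w}) = c) (T T' : Finset W) :
    μ.restrict (π ⁻¹' ↑T') (π ⁻¹' ↑T) = ((T ∩ T').card : ENNReal) * c := by
  choose t hsub hmeas hμt using fun w => exists_measurable_superset μ (π ⁻¹' {w})
  have htc : ∀ w, μ (t w) = c := fun w => (hμt w).trans (hcyl w)
  have hpair : ∀ w w', w ≠ w' → μ (t w ∩ t w') = 0 := by
    intro w w' hne
    have h2 : μ (π ⁻¹' ↑({w, w'} : Finset W)) = 2 * c := by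
      rw [measure_preimage_finset μ π c hc htot hcyl]
      rw [Finset.card_insert_of_notMem (by simp [hne]), Finset.card_singleton]
      norm_num
    have hsub2 : π ⁻¹' ↑({w, w'} : Finset W) ⊆ t w ∪ t w' := by
      intro ω hω
      simp only [Finset.coe_insert, Finset.coe_singleton, Set.mem_preimage,
        Set.mem_insert_iff, Set.mem_singleton_iff] at hω
      rcases hω with h | h
      · exact Or.inl (hsub w (by simp [h]))
      · exact Or.inr (hsub w' (by simp [h]))
    have hge : 2 * c ≤ μ (t w ∪ t w') := h2 ▸ measure_mono hsub2
    have hiq : μ (t w ∪ t w') + μ (t w ∩ t w') = 2 * c := by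
      rw [measure_union_add_inter _ (hmeas w'), htc, htc, two_mul]
    have hle : μ (t w ∪ t w') ≤ 2 * c := hiq ▸ le_add_right le_rfl
    have heq : μ (t w ∪ t w') = 2 * c := le_antisymm hle hge
    rw [heq] at hiq
    have h2c : (2 : ENNReal) * c ≠ ⊤ := ENNReal.mul_ne_top (by norm_num) hc
    have : 2 * c + μ (t w ∩ t w') = 2 * c + 0 := by rw [add_zero]; exact hiq
    exact (ENNReal.add_right_inj h2c).1 this
  set A := π ⁻¹' (↑T' : Set W) with hA
  have hlo : ((T ∩ T').card : ENNReal) * c ≤ μ.restrict A (π ⁻¹' ↑T) := by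
    have hI : π ⁻¹' ↑T ∩ A = π ⁻¹' ↑(T ∩ T') := by
      ext ω; simp [hA]
    have := Measure.le_restrict_apply (μ := μ) A (π ⁻¹' ↑T)
    rw [hI, measure_preimage_finset μ π c hc htot hcyl] at this
    exact this
  refine le_antisymm ?_ hlo
  have hBsub : π ⁻¹' (↑T : Set W) ⊆ ⋃ w ∈ T, t w := by
    intro ω hω
    exact Set.mem_biUnion hω (hsub (π ω) rfl)
  have hmeasU : MeasurableSet (⋃ w ∈ T, t w) :=
    MeasurableSet.biUnion T.countable_toSet (fun w _ => hmeas w)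
  calc μ.restrict A (π ⁻¹' ↑T) ≤ μ.restrict A (⋃ w ∈ T, t w) := measure_mono hBsub
    _ = μ ((⋃ w ∈ T, t w) ∩ A) := Measure.restrict_apply hmeasU
    _ ≤ μ (⋃ w ∈ T, ⋃ w' ∈ T', t w ∩ t w') := by
        apply measure_mono
        rintro ω ⟨hω1, hω2⟩
        simp only [Set.mem_iUnion] at hω1 ⊢
        obtain ⟨w, hwT, hωw⟩ := hω1
        have hω2' : ω ∈ ⋃ w' ∈ T', t w' := by
          have : π ω ∈ T' := hω2
          exact Set.mem_biUnion this (hsub (π ω) rfl)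
        simp only [Set.mem_iUnion] at hω2'
        obtain ⟨w', hwT', hωw'⟩ := hω2'
        exact ⟨w, hwT, w', hwT', hωw, hωw'⟩
    _ ≤ ∑ w ∈ T, μ (⋃ w' ∈ T', t w ∩ t w') := measure_biUnion_finset_le T _
    _ ≤ ∑ w ∈ T, ∑ w' ∈ T', μ (t w ∩ t w') := by
        exact Finset.sum_le_sum fun w _ => measure_biUnion_finset_le T' _
    _ ≤ ∑ w ∈ T, ∑ w' ∈ T', (if w = w' then c else 0) := by
        apply Finset.sum_le_sum
        intro w _
        apply Finset.sum_le_sum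
        intro w' _
        by_cases h : w = w'
        · subst h
          rw [if_pos rfl, Set.inter_self]
          exact le_of_eq (htc w)
        · rw [if_neg h, hpair w w' h]
    _ = ((T ∩ T').card : ENNReal) * c := by
        have : ∀ w ∈ T, (∑ w' ∈ T', if w = w' then c else 0) = (if w ∈ T' then c else 0) := by
          intro w _
          rw [Finset.sum_ite_eq]
        rw [Finset.sum_congr rfl this, Finset.sum_ite_mem, Finset.sum_const, nsmul_eq_mul]

end Meas

lemma card_filter_fixed {ι : Type*} [Fintype ι] [DecidableEq ι] (T : Finset ι) (v : ι → ZMod 2) :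
    (Finset.univ.filter (fun u : ι → ZMod 2 => ∀ i ∈ T, u i = v i)).card
      = 2 ^ (Fintype.card ι - T.card) := by
  classical
  have hset : Finset.univ.filter (fun u : ι → ZMod 2 => ∀ i ∈ T, u i = v i)
      = Fintype.piFinset (fun i => if i ∈ T then ({v i} : Finset (ZMod 2)) else Finset.univ) := by
    ext u
    simp only [Finset.mem_filter, Finset.mem_univ, true_and, Fintype.mem_piFinset]
    constructor
    · intro h i
      by_cases hi : i ∈ T
      · rw [if_pos hi]; simp [h i hi]
      · rw [if_neg hi]; simp
    · intro h i hi
      have := h i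
      rw [if_pos hi] at this
      simpa using this
  rw [hset, Fintype.card_piFinset]
  have : ∀ i : ι, ((if i ∈ T then ({v i} : Finset (ZMod 2)) else Finset.univ)).card
      = if i ∈ T then 1 else 2 := by
    intro i
    by_cases hi : i ∈ T <;> simp [hi]
  rw [Finset.prod_congr rfl (fun i _ => this i), Finset.prod_ite, Finset.prod_const,
    Finset.prod_const, one_pow, one_mul]
  congr 1
  rw [← Finset.card_compl]
  congr 1
  ext i
  simp

def IcF (L : ℕ) : Finset ℤ := Finset.Icc (0:ℤ) (L:ℤ)
def JcF (L k : ℕ) : Finset ℤ := Finset.Icc (k:ℤ) ((L:ℤ) - k)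
noncomputable def extI (L : ℕ) (w : {x // x ∈ IcF L} → ZMod 2) : Config :=
  fun x => if h : x ∈ IcF L then w ⟨x, h⟩ else 0
noncomputable def extJ (L k : ℕ) (u : {x // x ∈ JcF L k} → ZMod 2) : Config :=
  fun x => if h : x ∈ JcF L k then u ⟨x, h⟩ else 0
noncomputable def puPoly (L k : ℕ) (u : {x // x ∈ JcF L k} → ZMod 2) : Polynomial (ZMod 2) :=
  polyOf (fun x => extJ L k u (x + k)) (L - 2*k)

lemma extJ_eq_cfg (L k : ℕ) (hk2 : 2*k ≤ L) (u : {x // x ∈ JcF L k} → ZMod 2) :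
    extJ L k u = cfg (puPoly L k u) k := by
  funext x
  by_cases hx0 : 0 ≤ x - (k:ℤ)
  · rw [cfg, coeffZ, if_pos hx0, puPoly, coeff_polyOf]
    by_cases hxL : (x - (k:ℤ)).toNat ≤ L - 2*k
    · rw [if_pos hxL]
      congr 1
      omega
    · rw [if_neg hxL, extJ, dif_neg]
      simp only [JcF, Finset.mem_Icc]
      omega
  · rw [cfg, coeffZ, if_neg hx0, extJ, dif_neg]
    simp only [JcF, Finset.mem_Icc]
    omega

lemma natDegree_puPoly (L k : ℕ) (u : {x // x ∈ JcF L k} → ZMod 2) :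
    (puPoly L k u).natDegree ≤ L - 2*k := natDegree_polyOf _ _

open Classical in
lemma card_good (L k : ℕ) (hk1 : 1 ≤ k) (hk2 : 2*k ≤ L) (S : Finset ℤ)
    (hS : ↑S ⊆ Set.Icc (k:ℤ) ((L:ℤ) - k)) (v : ℤ → ZMod 2) :
    (Finset.univ.filter (fun w : {x // x ∈ IcF L} → ZMod 2 =>
        rp ^ k ∣ polyOf (extI L w) L ∧
        ∀ x ∈ S, (polyOf (extI L w) L /ₘ rp ^ k).coeff (x - (k:ℤ)).toNat = v x)).card
      = 2 ^ (L - 2*k + 1 - S.card) := by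
  classical
  have hqm : (rp ^ k).Monic := monic_rp.pow k
  have hqdeg : (rp ^ k).natDegree = 2 * k := by
    rw [Polynomial.natDegree_pow, natDegree_rp, Nat.mul_comm]
  have hSJ : ∀ x ∈ S, x ∈ JcF L k := by
    intro x hx
    have := hS hx
    simp only [Set.mem_Icc] at this
    simp only [JcF, Finset.mem_Icc]
    exact this
  obtain ⟨T, hT⟩ : ∃ T : Finset {x // x ∈ JcF L k},
      T = Finset.univ.filter (fun x : {x // x ∈ JcF L k} => (x:ℤ) ∈ S) := ⟨_, rfl⟩
  have hTcard : T.card = S.card := by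
    have hTsub : T = S.subtype (· ∈ JcF L k) := by
      ext ⟨x, hx⟩
      simp [hT, Finset.mem_subtype]
    rw [hTsub, Finset.card_subtype, Finset.filter_true_of_mem hSJ]
  have hcardJ : Fintype.card {x // x ∈ JcF L k} = L - 2*k + 1 := by
    rw [Fintype.card_coe, JcF, Int.card_Icc]
    omega
  -- abbreviations
  obtain ⟨uOf, huOf⟩ : ∃ uOf : ({x // x ∈ IcF L} → ZMod 2) → ({x // x ∈ JcF L k} → ZMod 2),
      uOf = fun w (x : {x // x ∈ JcF L k}) => (polyOf (extI L w) L /ₘ rp ^ k).coeff ((x:ℤ) - (k:ℤ)).toNat := ⟨_, rfl⟩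
  obtain ⟨wOf, hwOf⟩ : ∃ wOf : ({x // x ∈ JcF L k} → ZMod 2) → ({x // x ∈ IcF L} → ZMod 2),
      wOf = fun u (x : {x // x ∈ IcF L}) => step^[k] (extJ L k u) (x:ℤ) := ⟨_, rfl⟩
  -- key computations
  have key1 : ∀ u, step^[k] (extJ L k u) = cfg (rp ^ k * puPoly L k u) 0 := by
    intro u
    rw [extJ_eq_cfg L k hk2, iterate_step_cfg]
    norm_num
  have hdegmul : ∀ u, (rp ^ k * puPoly L k u).natDegree ≤ L := by
    intro u
    refine le_trans (Polynomial.natDegree_mul_le) ?_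
    rw [hqdeg]
    have := natDegree_puPoly L k u
    omega
  have key3 : ∀ u, polyOf (extI L (wOf u)) L = rp ^ k * puPoly L k u := by
    intro u
    have : polyOf (extI L (wOf u)) L = polyOf (step^[k] (extJ L k u)) L := by
      apply polyOf_congr
      intro n hn
      rw [extI, dif_pos (by simp [IcF, Finset.mem_Icc]; omega)]
      simp only [hwOf]
    rw [this, key1 u]
    exact polyOf_cfg (hdegmul u)
  have key4 : ∀ u, ∀ x : ℤ, x ∈ JcF L k →
      ((rp ^ k * puPoly L k u) /ₘ rp ^ k).coeff (x - (k:ℤ)).toNat = extJ L k u x := by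
    intro u x hx
    simp only [JcF, Finset.mem_Icc] at hx
    rw [Polynomial.mul_divByMonic_cancel_left _ hqm, puPoly, coeff_polyOf,
      if_pos (by omega)]
    congr 1
    omega
  have key5 : ∀ w, rp ^ k ∣ polyOf (extI L w) L →
      extJ L k (uOf w) = cfg (polyOf (extI L w) L /ₘ rp ^ k) k := by
    intro w hw
    have hdeg : (polyOf (extI L w) L /ₘ rp ^ k).natDegree ≤ L - 2*k := by
      rw [Polynomial.natDegree_divByMonic _ hqm, hqdeg]
      have := natDegree_polyOf (extI L w) L
      omega
    funext x
    by_cases hxJ : x ∈ JcF L k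
    · have hx' : (k:ℤ) ≤ x := by simp only [JcF, Finset.mem_Icc] at hxJ; exact hxJ.1
      rw [extJ, dif_pos hxJ, cfg, coeffZ, if_pos (by omega)]
      simp only [huOf]
    · simp only [JcF, Finset.mem_Icc, not_and, not_le] at hxJ
      rw [extJ, dif_neg (by simp only [JcF, Finset.mem_Icc]; omega), cfg, coeffZ]
      by_cases h0 : 0 ≤ x - (k:ℤ)
      · rw [if_pos h0]
        exact (Polynomial.coeff_eq_zero_of_natDegree_lt (by omega)).symm
      · rw [if_neg h0]
  have key7 : ∀ w, rp ^ k ∣ polyOf (extI L w) L → wOf (uOf w) = w := by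
    intro w hw
    have hP : rp ^ k * (polyOf (extI L w) L /ₘ rp ^ k) = polyOf (extI L w) L := by
      conv_rhs => rw [← Polynomial.modByMonic_add_div (polyOf (extI L w) L) (rp ^ k)]
      rw [(Polynomial.modByMonic_eq_zero_iff_dvd hqm).2 hw, zero_add]
    have hstep : step^[k] (extJ L k (uOf w)) = cfg (polyOf (extI L w) L) 0 := by
      rw [key5 w hw, iterate_step_cfg, hP]
      norm_num
    have hcfgP : cfg (polyOf (extI L w) L) 0 = extI L w := by
      apply cfg_polyOf
      intro x hx
      rw [extI, dif_neg]
      simp only [IcF, Finset.mem_Icc]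
      simp only [Set.mem_Icc] at hx
      omega
    funext x
    simp only [hwOf]
    rw [hstep, hcfgP, extI, dif_pos x.2]
  have hgoal2 : (Finset.univ.filter
      (fun u : {x // x ∈ JcF L k} → ZMod 2 => ∀ i ∈ T, u i = v (i : ℤ))).card
      = 2 ^ (L - 2*k + 1 - S.card) := by
    rw [card_filter_fixed T (fun x : {x // x ∈ JcF L k} => v (x : ℤ)), hcardJ, hTcard]
  rw [← hgoal2]
  refine Finset.card_bij' (fun w _ => uOf w) (fun u _ => wOf u) ?_ ?_ ?_ ?_
  · -- uOf w ∈ source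
    intro w hw
    simp only [Finset.mem_filter, Finset.mem_univ, true_and] at hw ⊢
    intro i hi
    simp only [hT, Finset.mem_filter, Finset.mem_univ, true_and] at hi
    simp only [huOf]
    exact hw.2 (i:ℤ) hi
  · -- wOf u ∈ good
    intro u hu
    simp only [Finset.mem_filter, Finset.mem_univ, true_and] at hu ⊢
    constructor
    · rw [key3 u]
      exact Dvd.intro _ rfl
    · intro x hx
      have hxJ := hSJ x hx
      rw [key3 u, key4 u x hxJ, extJ, dif_pos hxJ]
      exact hu ⟨x, hxJ⟩ (by simp [hT, hx])
  · -- left inverse : wOf (uOf w) = w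
    intro w hw
    simp only [Finset.mem_filter, Finset.mem_univ, true_and] at hw
    exact key7 w hw.1
  · -- right inverse : uOf (wOf u) = u
    intro u hu
    funext x
    simp only [huOf]
    rw [key3 u, key4 u (x:ℤ) x.2, extJ, dif_pos x.2]

lemma two_pow_mul (a d : ℕ) (h : d ≤ a) :
    (2:ENNReal)^(a-d) * ((2:ENNReal)⁻¹)^a = ((2:ENNReal)⁻¹)^d := by
  calc (2:ENNReal)^(a-d) * ((2:ENNReal)⁻¹)^a
      = (2:ENNReal)^(a-d) * (((2:ENNReal)⁻¹)^(a-d) * ((2:ENNReal)⁻¹)^d) := by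
        rw [← pow_add, Nat.sub_add_cancel h]
    _ = ((2 * 2⁻¹ : ENNReal))^(a-d) * ((2:ENNReal)⁻¹)^d := by
        rw [mul_pow, mul_assoc]
    _ = ((2:ENNReal)⁻¹)^d := by
        rw [ENNReal.mul_inv_cancel (by norm_num) (by norm_num), one_pow, one_mul]


theorem predecessors_of_random_seeds {Ω : Type*} [MeasurableSpace Ω]
    (μ : Measure Ω) [IsProbabilityMeasure μ] (L : ℕ) (init : Ω → Config)
    (hrand : IIDFairOn μ init (Set.Icc (0 : ℤ) L))
    (hzero : ∀ x ∉ Set.Icc (0 : ℤ) (L : ℤ), ∀ ω, init ω x = 0)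
    (k : ℕ) (hk1 : 1 ≤ k) (hk2 : 2 * k ≤ L) :
    μ {ω | HasPred k (init ω)} = (4 : ENNReal)⁻¹ ^ k ∧
    ∃ pred : Ω → Config,
      (∀ ω, HasPred k (init ω) →
        step^[k] (pred ω) = init ω ∧
        {x : ℤ | pred ω x ≠ 0}.Finite ∧
        ∀ x ∉ Set.Icc (k : ℤ) ((L : ℤ) - k), pred ω x = 0) ∧
      IIDFairOn (ProbabilityTheory.cond μ {ω | HasPred k (init ω)}) pred
        (Set.Icc (k : ℤ) ((L : ℤ) - k)) := by
  classical
  have hqm : (rp ^ k).Monic := monic_rp.pow k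
  have hqdeg : (rp ^ k).natDegree = 2 * k := by
    rw [Polynomial.natDegree_pow, natDegree_rp, Nat.mul_comm]
  obtain ⟨π, hπ⟩ : ∃ π : Ω → ({x // x ∈ IcF L} → ZMod 2),
      π = fun ω (x : {x // x ∈ IcF L}) => init ω (x:ℤ) := ⟨_, rfl⟩
  obtain ⟨c, hcdef⟩ : ∃ c : ENNReal, c = (2:ENNReal)⁻¹ ^ (L+1) := ⟨_, rfl⟩
  have hc : c ≠ ⊤ := by
    rw [hcdef]
    exact ENNReal.pow_ne_top (by norm_num)
  have hcardI : Fintype.card {x // x ∈ IcF L} = L + 1 := by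
    rw [Fintype.card_coe, IcF, Int.card_Icc]
    omega
  have htot : (Fintype.card ({x // x ∈ IcF L} → ZMod 2) : ENNReal) * c = 1 := by
    rw [Fintype.card_fun, hcardI, ZMod.card 2, hcdef]
    push_cast
    have := two_pow_mul (L+1) 0 (by omega)
    simpa using this
  have hcyl : ∀ w, μ (π ⁻¹' {w}) = c := by
    intro w
    have hs : ↑(IcF L) ⊆ Set.Icc (0:ℤ) (L:ℤ) := by rw [IcF, Finset.coe_Icc]
    have h := hrand (IcF L) hs (extI L w)
    have hset : {ω | ∀ x ∈ IcF L, init ω x = extI L w x} = π ⁻¹' {w} := by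
      ext ω
      simp only [Set.mem_setOf_eq, Set.mem_preimage, Set.mem_singleton_iff]
      constructor
      · intro h'
        funext x
        rw [hπ]
        simp only
        rw [h' x x.2, extI, dif_pos x.2]
      · intro h' x hx
        have := congrFun h' ⟨x, hx⟩
        rw [hπ] at this
        simp only at this
        rw [this, extI, dif_pos hx]
    rw [hset] at h
    rw [h, hcdef, IcF, Int.card_Icc, show ((L:ℤ) + 1 - 0).toNat = L + 1 by omega]
  have hpolyeq : ∀ ω, polyOf (extI L (π ω)) L = polyOf (init ω) L := by
    intro ω
    apply polyOf_congr
    intro n hn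
    rw [extI, dif_pos (by simp [IcF, Finset.mem_Icc]; omega), hπ]
  have hAiff : ∀ ω, HasPred k (init ω) ↔ rp ^ k ∣ polyOf (init ω) L := by
    intro ω
    exact hasPred_iff (fun x hx => hzero x hx ω)
  obtain ⟨TA, hTA⟩ : ∃ TA : Finset ({x // x ∈ IcF L} → ZMod 2),
      TA = Finset.univ.filter (fun w => rp ^ k ∣ polyOf (extI L w) L ∧
        ∀ x ∈ (∅ : Finset ℤ), (polyOf (extI L w) L /ₘ rp ^ k).coeff (x - (k:ℤ)).toNat
          = (0 : ℤ → ZMod 2) x) := ⟨_, rfl⟩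
  have hAset : {ω | HasPred k (init ω)} = π ⁻¹' ↑TA := by
    ext ω
    simp only [Set.mem_setOf_eq, Set.mem_preimage, Finset.mem_coe, hTA, Finset.mem_filter,
      Finset.mem_univ, true_and, Finset.notMem_empty, false_implies, implies_true, and_true]
    rw [hAiff ω, hpolyeq ω]
  have hTAcard : TA.card = 2 ^ (L - 2*k + 1) := by
    rw [hTA]
    have := card_good L k hk1 hk2 ∅ (by simp) 0
    simpa using this
  have hμA : μ {ω | HasPred k (init ω)} = ((2:ENNReal)⁻¹) ^ (2*k) := by
    rw [hAset, measure_preimage_finset μ π c hc htot hcyl, hTAcard, hcdef]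
    push_cast
    rw [show L - 2*k + 1 = (L+1) - 2*k by omega]
    exact two_pow_mul (L+1) (2*k) (by omega)
  have h4 : ((4:ENNReal))⁻¹ ^ k = ((2:ENNReal)⁻¹) ^ (2*k) := by
    rw [show (4:ENNReal) = 2^2 by norm_num, ENNReal.inv_pow]
    exact (pow_mul _ 2 k).symm
  constructor
  · rw [hμA, h4]
  · refine ⟨fun ω => cfg (polyOf (init ω) L /ₘ rp ^ k) k, ?_, ?_⟩
    · intro ω hω
      have hdvd := (hAiff ω).1 hω
      have hPfact : rp ^ k * (polyOf (init ω) L /ₘ rp ^ k) = polyOf (init ω) L := by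
        conv_rhs => rw [← Polynomial.modByMonic_add_div (polyOf (init ω) L) (rp ^ k)]
        rw [(Polynomial.modByMonic_eq_zero_iff_dvd hqm).2 hdvd, zero_add]
      have hdeg : (polyOf (init ω) L /ₘ rp ^ k).natDegree ≤ L - 2*k := by
        rw [Polynomial.natDegree_divByMonic _ hqm, hqdeg]
        have := natDegree_polyOf (init ω) L
        omega
      refine ⟨?_, cfg_support_finite _ _, ?_⟩
      · rw [iterate_step_cfg, hPfact]
        norm_num
        exact cfg_polyOf (fun x hx => hzero x hx ω)
      · intro x hx
        simp only [Set.mem_Icc, not_and, not_le] at hx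
        by_cases hxk : (k:ℤ) ≤ x
        · exact cfg_eq_zero_of_gt (by have := hx hxk; omega)
        · simp only [cfg, coeffZ]
          rw [if_neg (by omega)]
    · intro S hS v
      obtain ⟨TB, hTB⟩ : ∃ TB : Finset ({x // x ∈ IcF L} → ZMod 2),
          TB = Finset.univ.filter (fun w =>
            ∀ x ∈ S, (polyOf (extI L w) L /ₘ rp ^ k).coeff (x - (k:ℤ)).toNat = v x) := ⟨_, rfl⟩
      have hBset : {ω | ∀ x ∈ S, cfg (polyOf (init ω) L /ₘ rp ^ k) k x = v x}
          = π ⁻¹' ↑TB := by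
        ext ω
        simp only [Set.mem_setOf_eq, Set.mem_preimage, Finset.mem_coe, hTB, Finset.mem_filter,
          Finset.mem_univ, true_and]
        apply forall₂_congr
        intro x hx
        have hxk : (k:ℤ) ≤ x := by
          have := hS hx
          simp only [Set.mem_Icc] at this
          exact this.1
        rw [hpolyeq ω, cfg, coeffZ, if_pos (by omega)]
      have hinter : TB ∩ TA = Finset.univ.filter
          (fun w : {x // x ∈ IcF L} → ZMod 2 => rp ^ k ∣ polyOf (extI L w) L ∧
            ∀ x ∈ S, (polyOf (extI L w) L /ₘ rp ^ k).coeff (x - (k:ℤ)).toNat = v x) := by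
        ext w
        simp only [Finset.mem_inter, hTA, hTB, Finset.mem_filter, Finset.mem_univ, true_and,
          Finset.notMem_empty, false_implies, implies_true, and_true]
        tauto
      have hScard : S.card ≤ L - 2*k + 1 := by
        have hsub : S ⊆ Finset.Icc (k:ℤ) ((L:ℤ) - k) := by
          intro x hx
          have := hS hx
          simp only [Set.mem_Icc] at this
          simp only [Finset.mem_Icc]
          exact this
        have := Finset.card_le_card hsub
        rw [Int.card_Icc] at this
        omega
      have hcond : ProbabilityTheory.cond μ {ω | HasPred k (init ω)}
          {ω | ∀ x ∈ S, cfg (polyOf (init ω) L /ₘ rp ^ k) k x = v x}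
          = (μ {ω | HasPred k (init ω)})⁻¹
            * μ.restrict (π ⁻¹' ↑TA) (π ⁻¹' ↑TB) := by
        rw [ProbabilityTheory.cond, Measure.smul_apply, smul_eq_mul, hBset, hAset]
      rw [hcond, hμA, restrict_preimage_finset μ π c hc htot hcyl, hinter,
        card_good L k hk1 hk2 S hS v, hcdef]
      push_cast
      rw [show L - 2*k + 1 - S.card = (L+1) - (2*k + S.card) by omega,
        two_pow_mul (L+1) (2*k + S.card) (by omega), pow_add, ← mul_assoc,
        ENNReal.inv_mul_cancel (pow_ne_zero _ (ENNReal.inv_ne_zero.2 (by norm_num)))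
          (ENNReal.pow_ne_top (by norm_num)), one_mul]
end CAaux
end
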